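/- arXiv:1411.1936 — 5 statements merged into one kernel-verified Lean document; each statement's English description precedes it below -/
import Mathlib

section
/- For every f ∈ Λ₀ and all r, s ∈ (0,∞), one has |f(r) − f(s)| ≤ 2^{−1/2}·|r² − s²|^{1/2}·‖f‖₀. In particular, f is Lipschitz of order 1/2 on every bounded subinterval of (0,∞). -/
open MeasureTheory Set Filter

noncomputable section

/-- The radial Beppo Levi energy space `Λ₀`: functions `f : (0,∞) → ℂ` of class `C¹`
whose derivative `f′` is locally absolutely continuous on compact subintervals of `(0,∞)`
(encoded by the fundamental theorem of calculus with an integrable density `f″`),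
and whose radial Beppo Levi energy `∫₀^∞ ( r·|f″(r)|² + (1/r)·|f′(r)|² ) dr` is finite. -/
structure Lambda0 where
  f : ℝ → ℂ
  f' : ℝ → ℂ
  f'' : ℝ → ℂ
  hasDeriv : ∀ r ∈ Set.Ioi (0:ℝ), HasDerivAt f (f' r) r
  contDeriv : ContinuousOn f' (Set.Ioi 0)
  locAC : ∀ a b : ℝ, 0 < a → a ≤ b →
    MeasureTheory.IntegrableOn f'' (Set.Icc a b) ∧
      ∀ x ∈ Set.Icc a b, f' x = f' a + ∫ t in a..x, f'' t
  energyFin : MeasureTheory.IntegrableOn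
    (fun r : ℝ => r * ‖f'' r‖ ^ 2 + (1 / r) * ‖f' r‖ ^ 2) (Set.Ioi 0)

/-- The squared radial Beppo Levi energy `‖·‖₀²` of a function with first derivative `g'`
and second derivative `g''`. -/
def energySq (g' g'' : ℝ → ℂ) : ℝ :=
  ∫ r in Set.Ioi (0:ℝ), (r * ‖g'' r‖ ^ 2 + (1 / r) * ‖g' r‖ ^ 2)

/-- The seminorm `‖f‖₀`. -/
def Lambda0.seminorm0 (F : Lambda0) : ℝ :=
  Real.sqrt (energySq F.f' F.f'')

/-- The semi-inner product `⟨f,g⟩₀`. -/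
def innerBL (F G : Lambda0) : ℂ :=
  ∫ r in Set.Ioi (0:ℝ),
    ((r : ℂ) * F.f'' r * (starRingEnd ℂ) (G.f'' r) +
      (1 / (r : ℂ)) * F.f' r * (starRingEnd ℂ) (G.f' r))

/-- A Beppo Levi `L₀`-spline on the positive knots `r 1 < r 2 < … < r n`:
piecewise of the form `a·x² + b·x²·ln x + c + d·ln x` between consecutive knots,
of the form `a·x² + b·x²·ln x + c` on `(0, r 1)`, of the form `c + d·ln x` on `(r n, ∞)`,
`C²` throughout `(0,∞)`, and continuously extended at `0`. -/
structure IsBLSpline (n : ℕ) (r : ℕ → ℝ) (η : ℝ → ℂ) : Prop where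
  pieces : ∀ j : ℕ, 1 ≤ j → j + 1 ≤ n → ∃ a b c d : ℂ,
    ∀ x ∈ Set.Ioo (r j) (r (j + 1)),
      η x = a * (x : ℂ) ^ 2 + b * (x : ℂ) ^ 2 * (Real.log x : ℂ) + c + d * (Real.log x : ℂ)
  left : ∃ a b c : ℂ, ∀ x ∈ Set.Ioo (0 : ℝ) (r 1),
      η x = a * (x : ℂ) ^ 2 + b * (x : ℂ) ^ 2 * (Real.log x : ℂ) + c
  right : ∃ c d : ℂ, ∀ x ∈ Set.Ioi (r n), η x = c + d * (Real.log x : ℂ)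
  smooth : ContDiffOn ℝ 2 η (Set.Ioi 0)
  cont0 : ContinuousWithinAt η (Set.Ici 0) 0

/-- A Beppo Levi `L₀`-spline is non-singular if on `(0, r₁)` it has the form `a·x² + c`. -/
def NonSingularBLS (r1 : ℝ) (η : ℝ → ℂ) : Prop :=
  ∃ a c : ℂ, ∀ x ∈ Set.Ioo (0 : ℝ) r1, η x = a * (x : ℂ) ^ 2 + c

/-- Rabut's kernel `K`. -/
def Kfun (r t : ℝ) : ℝ :=
  if r ≤ t then 0 else (1 / 4) * (t ^ 2 - r ^ 2 + (r ^ 2 + t ^ 2) * Real.log (r / t))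

/-- The limiting kernel `H_{0,∞}` (with left endpoint knot `r1`). -/
def Hfun (r1 r t : ℝ) : ℝ :=
  Kfun r t - Kfun r r1 - Kfun r1 t + (1 / 4) * (r ^ 2 - r1 ^ 2) * Real.log (t / r1)

/-- The basis function `φ₀`. -/
def phi0 (r : ℝ) : ℝ :=
  if r ≤ 1 then r ^ 2 - r ^ 2 * Real.log r else 1 + Real.log r

/-- Johnson's compactly supported profile `η₂`. -/
def eta2 (x : ℝ) : ℂ :=
  (((4 / 3 : ℝ) * (Real.log 2 - phi0 x + phi0 (x / 2)) : ℝ) : ℂ)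

/-- The non-singular compactly supported profile `β`. -/
def betaFn (x : ℝ) : ℂ :=
  (((1 / 5 : ℝ) * (27 * Real.log 3 - 32 * Real.log 2 + 5 * phi0 x
      - 32 * phi0 (x / 2) + 27 * phi0 (x / 3)) : ℝ) : ℂ)

/-- `Ker L₀ = span{r², r² ln r, 1, ln r}`, as functions on `(0,∞)`. -/
def KerL0 : Set (ℝ → ℂ) :=
  {η | ∃ a b c d : ℂ, ∀ x : ℝ, 0 < x →
    η x = a * (x : ℂ) ^ 2 + b * (x : ℂ) ^ 2 * (Real.log x : ℂ) + c + d * (Real.log x : ℂ)}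

/-- `α(h) = inf_{η ∈ Ker L₀} sup_{t ∈ [0,1]} |t^μ − η(1+th)|`. -/
def alphaFn (μ h : ℝ) : ℝ :=
  sInf {v : ℝ | ∃ η ∈ KerL0,
    v = sSup ((fun t : ℝ => ‖((t ^ μ : ℝ) : ℂ) - η (1 + t * h)‖) '' Set.Icc (0 : ℝ) 1)}

/-!
Writing `f r - f s = ∫ t in s..r, f' t` and `‖f' t‖ = √t · (‖f' t‖ / √t)`, Cauchy–Schwarz gives
`‖f r - f s‖² ≤ (∫ t in s..r, t) · (∫ t in s..r, ‖f' t‖² / t) ≤ (r² - s²) / 2 · ‖f‖₀²`,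
since the second factor is part of the Beppo Levi energy.
-/

theorem integral_mul_le_sqrt_integral_sq_mul_sqrt_integral_sq {α : Type*} [MeasurableSpace α]
    {μ : Measure α} {f g : α → ℝ} (hf₀ : 0 ≤ᵐ[μ] f) (hg₀ : 0 ≤ᵐ[μ] g)
    (hf : MemLp f 2 μ) (hg : MemLp g 2 μ) :
    ∫ a, f a * g a ∂μ ≤ √(∫ a, f a ^ 2 ∂μ) * √(∫ a, g a ^ 2 ∂μ) := by
  simpa [Real.sqrt_eq_rpow] using integral_mul_le_Lp_mul_Lq_of_nonneg
    Real.HolderConjugate.two_two hf₀ hg₀ (by simpa using hf) (by simpa using hg)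

theorem ContinuousOn.memLp_two_restrict_Ioc {f : ℝ → ℝ} {a b : ℝ}
    (hf : ContinuousOn f (Icc a b)) : MemLp f 2 (volume.restrict (Ioc a b)) :=
  (memLp_two_iff_integrable_sq ((hf.mono Ioc_subset_Icc_self).aestronglyMeasurable
    measurableSet_Ioc)).mpr ((hf.pow 2).integrableOn_Icc.mono_set Ioc_subset_Icc_self)

theorem intervalIntegral.integral_mul_le_sqrt_mul_sqrt {f g : ℝ → ℝ} {a b : ℝ} (hab : a ≤ b)
    (hf : ContinuousOn f (Icc a b)) (hg : ContinuousOn g (Icc a b))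
    (hf₀ : ∀ x ∈ Icc a b, 0 ≤ f x) (hg₀ : ∀ x ∈ Icc a b, 0 ≤ g x) :
    ∫ x in a..b, f x * g x ≤ √(∫ x in a..b, f x ^ 2) * √(∫ x in a..b, g x ^ 2) := by
  have nonneg_ae {h : ℝ → ℝ} (h₀ : ∀ x ∈ Icc a b, 0 ≤ h x) : 0 ≤ᵐ[volume.restrict (Ioc a b)] h :=
    (ae_restrict_iff' measurableSet_Ioc).mpr
      (Eventually.of_forall fun x hx => h₀ x (Ioc_subset_Icc_self hx))
  simp only [intervalIntegral.integral_of_le hab]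
  exact integral_mul_le_sqrt_integral_sq_mul_sqrt_integral_sq (nonneg_ae hf₀) (nonneg_ae hg₀)
    hf.memLp_two_restrict_Ioc hg.memLp_two_restrict_Ioc

theorem norm_sub_le_sqrt_mul_sqrt_integral_norm_sq_div {E : Type*} [NormedAddCommGroup E]
    [NormedSpace ℝ E] [CompleteSpace E] {f f' : ℝ → E} {s r : ℝ} (hs : 0 < s) (hsr : s ≤ r)
    (hf : ∀ t ∈ Icc s r, HasDerivAt f (f' t) t) (hf' : ContinuousOn f' (Icc s r)) :
    ‖f r - f s‖ ≤ √((r ^ 2 - s ^ 2) / 2) * √(∫ t in s..r, ‖f' t‖ ^ 2 / t) := by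
  have hpos : ∀ t ∈ Icc s r, 0 < t := fun t ht => hs.trans_le ht.1
  have hsqrt : ContinuousOn (fun t => √t) (Icc s r) := Real.continuous_sqrt.continuousOn
  have hquot : ContinuousOn (fun t => ‖f' t‖ / √t) (Icc s r) :=
    hf'.norm.div hsqrt fun t ht => (Real.sqrt_pos.mpr (hpos t ht)).ne'
  calc ‖f r - f s‖ = ‖∫ t in s..r, f' t‖ := by
        rw [intervalIntegral.integral_eq_sub_of_hasDerivAt (by rwa [uIcc_of_le hsr])
          (hf'.intervalIntegrable_of_Icc hsr)]
    _ ≤ ∫ t in s..r, ‖f' t‖ := intervalIntegral.norm_integral_le_integral_norm hsr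
    _ = ∫ t in s..r, √t * (‖f' t‖ / √t) := by
        refine intervalIntegral.integral_congr fun t ht => ?_
        rw [uIcc_of_le hsr] at ht
        exact (mul_div_cancel₀ _ (Real.sqrt_pos.mpr (hpos t ht)).ne').symm
    _ ≤ √(∫ t in s..r, √t ^ 2) * √(∫ t in s..r, (‖f' t‖ / √t) ^ 2) :=
        intervalIntegral.integral_mul_le_sqrt_mul_sqrt hsr hsqrt hquot
          (fun t _ => Real.sqrt_nonneg t) fun t _ => by positivity
    _ = √((r ^ 2 - s ^ 2) / 2) * √(∫ t in s..r, ‖f' t‖ ^ 2 / t) := by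
        have hnonneg : ∀ t ∈ uIcc s r, 0 ≤ t := fun t ht =>
          (hpos t (by rwa [uIcc_of_le hsr] at ht)).le
        rw [intervalIntegral.integral_congr fun t ht => Real.sq_sqrt (hnonneg t ht), integral_id,
          intervalIntegral.integral_congr (g := fun t => ‖f' t‖ ^ 2 / t) fun t ht => by
            simp only [div_pow, Real.sq_sqrt (hnonneg t ht)]]

theorem abs_sq_sub_sq_le_mul_abs_sub {r s b : ℝ} (hr : 0 ≤ r) (hs : 0 ≤ s) (hrb : r ≤ b)
    (hsb : s ≤ b) : |r ^ 2 - s ^ 2| ≤ 2 * b * |r - s| := by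
  rw [sq_sub_sq, abs_mul, abs_of_nonneg (add_nonneg hr hs)]
  gcongr
  linarith

namespace Lambda0

theorem integral_norm_deriv_sq_div_le_energySq (F : Lambda0) {s r : ℝ} (hs : 0 < s)
    (hsr : s ≤ r) : ∫ t in s..r, ‖F.f' t‖ ^ 2 / t ≤ energySq F.f' F.f'' := by
  have hsub : Icc s r ⊆ Ioi 0 := fun t ht => hs.trans_le ht.1
  have hIoc : Ioc s r ⊆ Ioi 0 := Ioc_subset_Icc_self.trans hsub
  have hint : IntegrableOn (fun t => ‖F.f' t‖ ^ 2 / t) (Ioc s r) :=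
    (((F.contDeriv.mono hsub).norm.pow 2).div continuousOn_id fun t ht =>
      (hsub ht).ne').integrableOn_Icc.mono_set Ioc_subset_Icc_self
  rw [intervalIntegral.integral_of_le hsr]
  calc ∫ t in Ioc s r, ‖F.f' t‖ ^ 2 / t
      ≤ ∫ t in Ioc s r, (t * ‖F.f'' t‖ ^ 2 + (1 / t) * ‖F.f' t‖ ^ 2) := by
        refine setIntegral_mono_on hint (F.energyFin.mono_set hIoc) measurableSet_Ioc
          fun t ht => ?_
        have ht0 : 0 < t := hIoc ht
        rw [div_eq_mul_one_div, mul_comm]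
        exact le_add_of_nonneg_left (by positivity)
    _ ≤ energySq F.f' F.f'' := by
        refine setIntegral_mono_set F.energyFin ?_ hIoc.eventuallyLE
        refine (ae_restrict_iff' measurableSet_Ioi).mpr (Eventually.of_forall fun t ht => ?_)
        have ht0 : 0 < t := ht
        positivity

theorem norm_sub_le_of_le (F : Lambda0) {s r : ℝ} (hs : 0 < s) (hsr : s ≤ r) :
    ‖F.f r - F.f s‖ ≤ (2:ℝ) ^ (-(1/2 : ℝ)) * (r ^ 2 - s ^ 2) ^ ((1:ℝ)/2) * F.seminorm0 := by
  have hsub : Icc s r ⊆ Ioi 0 := fun t ht => hs.trans_le ht.1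
  calc ‖F.f r - F.f s‖ ≤ √((r ^ 2 - s ^ 2) / 2) * √(∫ t in s..r, ‖F.f' t‖ ^ 2 / t) :=
        norm_sub_le_sqrt_mul_sqrt_integral_norm_sq_div hs hsr
          (fun t ht => F.hasDeriv t (hsub ht)) (F.contDeriv.mono hsub)
    _ ≤ √((r ^ 2 - s ^ 2) / 2) * F.seminorm0 := by
        gcongr
        exact Real.sqrt_le_sqrt (F.integral_norm_deriv_sq_div_le_energySq hs hsr)
    _ = (2:ℝ) ^ (-(1/2 : ℝ)) * (r ^ 2 - s ^ 2) ^ ((1:ℝ)/2) * F.seminorm0 := by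
        rw [Real.sqrt_div' _ zero_le_two, Real.rpow_neg zero_le_two, ← Real.sqrt_eq_rpow,
          ← Real.sqrt_eq_rpow, div_eq_inv_mul]

theorem norm_sub_le (F : Lambda0) {r s : ℝ} (hr : 0 < r) (hs : 0 < s) :
    ‖F.f r - F.f s‖ ≤ (2:ℝ) ^ (-(1/2 : ℝ)) * |r ^ 2 - s ^ 2| ^ ((1:ℝ)/2) * F.seminorm0 := by
  rcases le_total s r with hsr | hrs
  · rw [abs_of_nonneg (sub_nonneg.mpr (pow_le_pow_left₀ hs.le hsr 2))]
    exact F.norm_sub_le_of_le hs hsr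
  · rw [norm_sub_rev, abs_sub_comm, abs_of_nonneg (sub_nonneg.mpr (pow_le_pow_left₀ hr.le hrs 2))]
    exact F.norm_sub_le_of_le hr hrs

theorem norm_sub_le_sqrt_mul_abs_sub_rpow (F : Lambda0) {a b r s : ℝ} (ha : 0 < a)
    (hr : r ∈ Icc a b) (hs : s ∈ Icc a b) :
    ‖F.f r - F.f s‖ ≤ √b * F.seminorm0 * |r - s| ^ ((1:ℝ)/2) := by
  have hb : 0 ≤ b := ha.le.trans (hr.1.trans hr.2)
  calc ‖F.f r - F.f s‖
      ≤ (2:ℝ) ^ (-(1/2 : ℝ)) * |r ^ 2 - s ^ 2| ^ ((1:ℝ)/2) * F.seminorm0 :=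
        F.norm_sub_le (ha.trans_le hr.1) (ha.trans_le hs.1)
    _ ≤ (2:ℝ) ^ (-(1/2 : ℝ)) * (2 * b * |r - s|) ^ ((1:ℝ)/2) * F.seminorm0 := by
        gcongr
        · exact Real.sqrt_nonneg _
        · exact abs_sq_sub_sq_le_mul_abs_sub (ha.trans_le hr.1).le (ha.trans_le hs.1).le hr.2 hs.2
    _ = √b * F.seminorm0 * |r - s| ^ ((1:ℝ)/2) := by
        rw [Real.mul_rpow (by positivity) (abs_nonneg _), Real.mul_rpow zero_le_two hb,
          ← Real.sqrt_eq_rpow b, Real.rpow_neg zero_le_two]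
        field_simp

end Lambda0

/-- for every `f ∈ Λ₀` and all `r, s ∈ (0,∞)`,
`|f(r) − f(s)| ≤ 2^{−1/2}·|r² − s²|^{1/2}·‖f‖₀`; in particular `f` is Lipschitz of
order `1/2` on every bounded subinterval of `(0,∞)`. -/
theorem stmt0 (F : Lambda0) :
    (∀ r ∈ Set.Ioi (0:ℝ), ∀ s ∈ Set.Ioi (0:ℝ),
      ‖F.f r - F.f s‖ ≤ (2:ℝ) ^ (-(1/2 : ℝ)) * |r ^ 2 - s ^ 2| ^ ((1:ℝ)/2) * F.seminorm0) ∧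
    (∀ a b : ℝ, 0 < a → a ≤ b → ∃ C : ℝ, ∀ r ∈ Set.Icc a b, ∀ s ∈ Set.Icc a b,
      ‖F.f r - F.f s‖ ≤ C * |r - s| ^ ((1:ℝ)/2)) :=
  ⟨fun _ hr _ hs => F.norm_sub_le hr hs,
    fun _ b ha _ =>
      ⟨√b * F.seminorm0, fun _ hr _ hs => F.norm_sub_le_sqrt_mul_abs_sub_rpow ha hr hs⟩⟩
end
end

section
/- For every f ∈ Λ₀: (a) the limit lim_{r→0⁺} f(r) exists, so f can be extended by continuity at 0; and (b) f′(r) = O(1) both as r → 0⁺ and as r → ∞, i.e. f′ is bounded on a neighborhood of 0 and on a neighborhood of ∞ in (0,∞). -/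
/-!
Split `(0, ∞)` into dyadic intervals `[r, 2r]`, on each of which `∫ dt / t = log 2`. There the
weight `1/r` forces a point where `‖f′‖² ≤ ‖f‖₀² / log 2`, and AM-GM,
`‖f″‖ ≤ (t‖f″‖² + 1/t) / 2`, bounds the oscillation of `f′` by `(‖f‖₀² + log 2) / 2`. Hence `f′`
is bounded on all of `(0, ∞)`, so `f` is Lipschitz there and has a limit at `0⁺`.
-/

open MeasureTheory Set Filter

noncomputable section

open Topology intervalIntegral

theorem UniformContinuousOn.exists_tendsto_nhdsWithin {α β : Type*} [UniformSpace α]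
    [UniformSpace β] [CompleteSpace β] {f : α → β} {s : Set α} {a : α}
    (hf : UniformContinuousOn f s) (ha : a ∈ closure s) :
    ∃ L, Tendsto f (𝓝[s] a) (𝓝 L) :=
  haveI := mem_closure_iff_nhdsWithin_neBot.1 ha
  CompleteSpace.complete ((cauchy_nhds.mono nhdsWithin_le_nhds).map_of_le hf inf_le_right)

lemma le_half_mul_sq_add_inv {x t : ℝ} (ht : 0 < t) : x ≤ (t * x ^ 2 + 1 / t) / 2 := by
  have hsq : 0 ≤ (t * x - 1) ^ 2 / t / 2 := by positivity
  have hdiff : (t * x ^ 2 + 1 / t) / 2 - x = (t * x - 1) ^ 2 / t / 2 := by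
    field_simp
    ring
  linarith

lemma intervalIntegrable_one_div_of_pos {a b : ℝ} (ha : 0 < a) (hb : 0 < b) :
    IntervalIntegrable (fun t : ℝ => 1 / t) volume a b :=
  intervalIntegrable_one_div (fun _ ht => (lt_of_lt_of_le (lt_min ha hb) ht.1).ne')
    continuousOn_id

namespace Lambda0

variable (F : Lambda0)

def energyDensity (r : ℝ) : ℝ :=
  r * ‖F.f'' r‖ ^ 2 + (1 / r) * ‖F.f' r‖ ^ 2

lemma energyDensity_nonneg {r : ℝ} (hr : 0 < r) : 0 ≤ F.energyDensity r := by
  unfold energyDensity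
  positivity

lemma intervalIntegrable_energyDensity {a b : ℝ} (ha : 0 < a) (hb : 0 < b) :
    IntervalIntegrable F.energyDensity volume a b :=
  (F.energyFin.mono_set fun _ ht => lt_of_lt_of_le (lt_min ha hb) ht.1).intervalIntegrable

lemma integral_energyDensity_le {a b : ℝ} (ha : 0 < a) (hab : a ≤ b) :
    ∫ t in a..b, F.energyDensity t ≤ energySq F.f' F.f'' := by
  rw [integral_of_le hab]
  exact setIntegral_mono_set F.energyFin
    (ae_restrict_of_forall_mem measurableSet_Ioi fun _ ht => F.energyDensity_nonneg ht)
    (Ioc_subset_Ioi_self.trans (Ioi_subset_Ioi ha.le)).eventuallyLE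

lemma norm_f''_le {t : ℝ} (ht : 0 < t) : ‖F.f'' t‖ ≤ (F.energyDensity t + 1 / t) / 2 := by
  have hamgm := le_half_mul_sq_add_inv (x := ‖F.f'' t‖) ht
  have hf' : 0 ≤ 1 / t * ‖F.f' t‖ ^ 2 := by positivity
  unfold energyDensity
  linarith

lemma integral_one_div_dyadic {a : ℝ} (ha : 0 < a) : ∫ t in a..2 * a, 1 / t = Real.log 2 := by
  rw [integral_one_div (by rw [uIcc_of_le (by linarith)]; exact fun h => ha.not_ge h.1),
    mul_div_cancel_right₀ _ ha.ne']

lemma norm_f'_sub_le {a x : ℝ} (ha : 0 < a) (hax : a ≤ x) (hx : x ≤ 2 * a) :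
    ‖F.f' x - F.f' a‖ ≤ (energySq F.f' F.f'' + Real.log 2) / 2 := by
  have h2a : a ≤ 2 * a := by linarith
  obtain ⟨hint, hftc⟩ := F.locAC a (2 * a) ha h2a
  have hnorm : IntervalIntegrable (fun t => ‖F.f'' t‖) volume a (2 * a) :=
    (intervalIntegrable_iff_integrableOn_Icc_of_le h2a).2 hint.norm
  have h2a_pos : 0 < 2 * a := by linarith
  have hinv := intervalIntegrable_one_div_of_pos ha h2a_pos
  have henergy := F.intervalIntegrable_energyDensity ha h2a_pos
  calc ‖F.f' x - F.f' a‖ = ‖∫ t in a..x, F.f'' t‖ := by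
        rw [hftc x ⟨hax, hx⟩, add_sub_cancel_left]
    _ ≤ ∫ t in a..x, ‖F.f'' t‖ := norm_integral_le_integral_norm hax
    _ ≤ ∫ t in a..2 * a, ‖F.f'' t‖ :=
        integral_mono_interval le_rfl hax hx (ae_of_all _ fun _ => norm_nonneg _) hnorm
    _ ≤ ∫ t in a..2 * a, (F.energyDensity t + 1 / t) / 2 :=
        integral_mono_on h2a hnorm ((henergy.add hinv).div_const 2)
          fun t ht => F.norm_f''_le (ha.trans_le ht.1)
    _ = ((∫ t in a..2 * a, F.energyDensity t) + Real.log 2) / 2 := by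
        rw [intervalIntegral.integral_div, integral_add henergy hinv, integral_one_div_dyadic ha]
    _ ≤ (energySq F.f' F.f'' + Real.log 2) / 2 := by
        gcongr
        exact F.integral_energyDensity_le ha h2a

lemma exists_sq_norm_f'_mul_log_two_le {r : ℝ} (hr : 0 < r) :
    ∃ t ∈ Icc r (2 * r), ‖F.f' t‖ ^ 2 * Real.log 2 ≤ energySq F.f' F.f'' := by
  have h2r : r ≤ 2 * r := by linarith
  have hpos : ∀ t ∈ Icc r (2 * r), 0 < t := fun t ht => hr.trans_le ht.1
  obtain ⟨t₀, ht₀, hmin⟩ := isCompact_Icc.exists_isMinOn (nonempty_Icc.2 h2r)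
    ((F.contDeriv.mono hpos).norm.pow 2)
  have h2r_pos : 0 < 2 * r := by linarith
  have hinv := (intervalIntegrable_one_div_of_pos hr h2r_pos).const_mul (‖F.f' t₀‖ ^ 2)
  refine ⟨t₀, ht₀, ?_⟩
  calc ‖F.f' t₀‖ ^ 2 * Real.log 2 = ∫ t in r..2 * r, ‖F.f' t₀‖ ^ 2 * (1 / t) := by
        rw [intervalIntegral.integral_const_mul, integral_one_div_dyadic hr]
    _ ≤ ∫ t in r..2 * r, F.energyDensity t := by
        refine integral_mono_on h2r hinv
          (F.intervalIntegrable_energyDensity hr h2r_pos) fun t ht => ?_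
        have ht0 := hpos t ht
        have hmin_t : ‖F.f' t₀‖ ^ 2 ≤ ‖F.f' t‖ ^ 2 := hmin ht
        have hf'' : 0 ≤ t * ‖F.f'' t‖ ^ 2 := by positivity
        unfold energyDensity
        nlinarith [one_div_pos.2 ht0]
    _ ≤ energySq F.f' F.f'' := F.integral_energyDensity_le hr h2r

lemma exists_norm_f'_le : ∃ C, ∀ r ∈ Ioi (0 : ℝ), ‖F.f' r‖ ≤ C := by
  set E := energySq F.f' F.f''
  refine ⟨√(E / Real.log 2) + (E + Real.log 2) / 2, fun r hr => ?_⟩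
  obtain ⟨t, ht, hsq⟩ := F.exists_sq_norm_f'_mul_log_two_le hr
  have hpeak : ‖F.f' t‖ ≤ √(E / Real.log 2) :=
    Real.le_sqrt_of_sq_le ((le_div_iff₀ (Real.log_pos one_lt_two)).2 hsq)
  have hosc : ‖F.f' r - F.f' t‖ ≤ (E + Real.log 2) / 2 := by
    rw [norm_sub_rev]
    exact F.norm_f'_sub_le hr ht.1 ht.2
  calc ‖F.f' r‖ ≤ ‖F.f' t‖ + ‖F.f' r - F.f' t‖ := norm_le_norm_add_norm_sub' _ _
    _ ≤ _ := add_le_add hpeak hosc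

lemma uniformContinuousOn_f : UniformContinuousOn F.f (Ioi 0) := by
  obtain ⟨C, hC⟩ := F.exists_norm_f'_le
  refine ((convex_Ioi 0).lipschitzOnWith_of_nnnorm_hasDerivWithin_le (C := C.toNNReal)
    (fun x hx => (F.hasDeriv x hx).hasDerivWithinAt) fun x hx => ?_).uniformContinuousOn
  rw [← NNReal.coe_le_coe, coe_nnnorm]
  exact (hC x hx).trans (Real.le_coe_toNNReal C)

end Lambda0

/-- every `f ∈ Λ₀` extends by continuity at `0`, and `f′(r) = O(1)`
as `r → 0⁺` and as `r → ∞`. -/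
theorem stmt1 (F : Lambda0) :
    (∃ L : ℂ, Filter.Tendsto F.f (nhdsWithin 0 (Set.Ioi 0)) (nhds L)) ∧
    (∃ C ε : ℝ, 0 < ε ∧ ∀ r ∈ Set.Ioo (0:ℝ) ε, ‖F.f' r‖ ≤ C) ∧
    (∃ C R : ℝ, ∀ r ∈ Set.Ioi R, ‖F.f' r‖ ≤ C) := by
  obtain ⟨C, hC⟩ := F.exists_norm_f'_le
  exact ⟨F.uniformContinuousOn_f.exists_tendsto_nhdsWithin (by simp),
    ⟨C, 1, one_pos, fun r hr => hC r hr.1⟩, ⟨C, 0, hC⟩⟩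
end
end

section
/- Let ρ = {r₁ < … < r_n} be positive knots and let α, ν₁, …, ν_n be arbitrary real values. Then there exists a unique Beppo Levi L₀-spline σ^A ∈ S₀(ρ) such that σ^A(r_j) = ν_j for all j ∈ {1,…,n} and σ^A(0) = α. -/
open MeasureTheory Set Filter

noncomputable section

/-!
Existence reduces to uniqueness by counting dimensions. A spline is described by the
coefficients `(a, b, c, d)` of its `n + 1` pieces, subject to `3 n` conditions of second-order
contact at the knots and to `d₀ = 0`, `aₙ = bₙ = 0`; this leaves at least `n + 1` degrees of freedom
for the `n + 1` interpolation conditions.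

For uniqueness let `η` be a spline vanishing at `0` and at the knots. On a piece,
`Δη = η'' + η'/x = 4(a + b) + 4b ln x`, so `x (Δη)' = 4b`, and the energy
`E = Re (x η' conj (Δη) - 4 conj b η)` has `E' = x |Δη|² ≥ 0`. As `η` vanishes at the knots, `E`
does not jump there; it vanishes at `0` (where `η = c₀ = 0`) and on the last piece (`a = b = 0`).
So `E ≡ 0`, hence `Δη ≡ 0` and `a = b = 0` on every piece; matching `η'` at the knots gives `d = 0`,
and the values at the knots give `c = 0`.
-/

theorem contDiffOn_two_of_hasDerivAt {E : Type*} [NormedAddCommGroup E] [NormedSpace ℝ E]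
    {f f' f'' : ℝ → E} {s : Set ℝ} (hs : IsOpen s) (hf : ∀ x ∈ s, HasDerivAt f (f' x) x)
    (hf' : ∀ x ∈ s, HasDerivAt f' (f'' x) x) (hf'' : ContinuousOn f'' s) :
    ContDiffOn ℝ 2 f s := by
  rw [show (2 : WithTop ℕ∞) = 1 + 1 from rfl, contDiffOn_succ_iff_deriv_of_isOpen hs]
  refine ⟨fun x hx => (hf x hx).differentiableAt.differentiableWithinAt, by simp,
    ContDiffOn.congr ?_ fun x hx => (hf x hx).deriv⟩
  rw [show (1 : WithTop ℕ∞) = 0 + 1 from rfl, contDiffOn_succ_iff_deriv_of_isOpen hs]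
  exact ⟨fun x hx => (hf' x hx).differentiableAt.differentiableWithinAt, by simp,
    (contDiffOn_zero.2 hf'').congr fun x hx => (hf' x hx).deriv⟩

theorem eqOn_indicator_Ici_Iic {E : Type*} [Zero E] {g : ℝ → E} {t : ℝ} (h0 : g t = 0) :
    EqOn ((Ici t).indicator g) 0 (Iic t) := fun y hy => by
  rcases (mem_Iic.1 hy).lt_or_eq with hy | rfl
  exacts [indicator_of_notMem (notMem_Ici.2 hy) g, (indicator_of_mem self_mem_Ici g).trans h0]

theorem hasDerivAt_indicator_Ici {E : Type*} [NormedAddCommGroup E] [NormedSpace ℝ E]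
    {g g' : ℝ → E} {t x : ℝ} (hg : t ≤ x → HasDerivAt g (g' x) x) (h0 : g t = 0)
    (h1 : g' t = 0) : HasDerivAt ((Ici t).indicator g) ((Ici t).indicator g' x) x := by
  rcases lt_trichotomy x t with hxt | rfl | hxt
  · rw [indicator_of_notMem (notMem_Ici.2 hxt)]
    exact (hasDerivAt_const x 0).congr_of_eventuallyEq
      (eventually_of_mem (Iic_mem_nhds hxt) (eqOn_indicator_Ici_Iic h0))
  · have hleft : HasDerivWithinAt ((Ici x).indicator g) (g' x) (Iic x) x :=
      h1 ▸ (hasDerivWithinAt_const x _ 0).congr (eqOn_indicator_Ici_Iic h0)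
        (eqOn_indicator_Ici_Iic h0 self_mem_Iic)
    have hright : HasDerivWithinAt ((Ici x).indicator g) (g' x) (Ici x) x :=
      (hg le_rfl).hasDerivWithinAt.congr (fun y hy => indicator_of_mem hy g)
        (indicator_of_mem self_mem_Ici g)
    rw [indicator_of_mem self_mem_Ici, ← hasDerivWithinAt_univ, ← Iic_union_Ici]
    exact hleft.union hright
  · rw [indicator_of_mem (mem_Ici.2 hxt.le)]
    exact (hg hxt.le).congr_of_eventuallyEq (eventually_of_mem (Ioi_mem_nhds hxt)
      fun y hy => indicator_of_mem (mem_Ici.2 (le_of_lt hy)) g)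

theorem continuousAt_indicator_Ici {E : Type*} [TopologicalSpace E] [Zero E] {g : ℝ → E}
    {t x : ℝ} (hg : t ≤ x → ContinuousAt g x) (h0 : g t = 0) :
    ContinuousAt ((Ici t).indicator g) x := by
  rcases lt_trichotomy x t with hxt | rfl | hxt
  · exact continuousAt_const.congr
      (eventually_of_mem (Iic_mem_nhds hxt) fun y hy => (eqOn_indicator_Ici_Iic h0 hy).symm)
  · have hleft : ContinuousWithinAt ((Ici x).indicator g) (Iic x) x :=
      continuousWithinAt_const.congr (eqOn_indicator_Ici_Iic h0)
        (eqOn_indicator_Ici_Iic h0 self_mem_Iic)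
    have hright : ContinuousWithinAt ((Ici x).indicator g) (Ici x) x :=
      (hg le_rfl).continuousWithinAt.congr (fun y hy => indicator_of_mem hy g)
        (indicator_of_mem self_mem_Ici g)
    rw [← continuousWithinAt_univ, ← Iic_union_Ici]
    exact hleft.union hright
  · exact (hg hxt.le).congr (eventually_of_mem (Ioi_mem_nhds hxt)
      fun y hy => (indicator_of_mem (mem_Ici.2 (le_of_lt hy)) g).symm)

theorem LinearMap.exists_mem_ker_apply_eq {K V W U : Type*} [Field K] [AddCommGroup V]
    [Module K V] [FiniteDimensional K V] [AddCommGroup W] [Module K W] [FiniteDimensional K W]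
    [AddCommGroup U] [Module K U] [FiniteDimensional K U] (f : V →ₗ[K] W) (g : V →ₗ[K] U)
    (hfg : LinearMap.ker f ⊓ LinearMap.ker g = ⊥)
    (hdim : Module.finrank K W + Module.finrank K U ≤ Module.finrank K V) (u : U) :
    ∃ v ∈ LinearMap.ker f, g v = u := by
  have hinj : Function.Injective (f.prod g) := by
    rw [← LinearMap.ker_eq_bot, LinearMap.ker_prod, hfg]
  have hrank : Module.finrank K V = Module.finrank K (W × U) :=
    le_antisymm (LinearMap.finrank_le_finrank_of_injective hinj)
      (by rw [Module.finrank_prod]; exact hdim)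
  obtain ⟨v, hv⟩ := (LinearMap.injective_iff_surjective_of_finrank_eq_finrank hrank).1 hinj (0, u)
  exact ⟨v, LinearMap.mem_ker.2 (congrArg Prod.fst hv), congrArg Prod.snd hv⟩

namespace BLSpline

open Topology ComplexConjugate

/-- A coefficient vector `p = (a, b, c, d)` stands for `a x² + b x² ln x + c + d ln x ∈ Ker L₀`. -/
def kerFun (x : ℝ) : (Fin 4 → ℂ) →ₗ[ℂ] ℂ where
  toFun p := p 0 * (x : ℂ) ^ 2 + p 1 * (x : ℂ) ^ 2 * (Real.log x : ℂ) + p 2 + p 3 * (Real.log x : ℂ)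
  map_add' p q := by simp only [Pi.add_apply]; ring
  map_smul' c p := by simp only [Pi.smul_apply, smul_eq_mul, RingHom.id_apply]; ring

def kerFun' (x : ℝ) : (Fin 4 → ℂ) →ₗ[ℂ] ℂ where
  toFun p := p 0 * (2 * x) + p 1 * (2 * x * (Real.log x : ℂ) + x) + p 3 * (x : ℂ)⁻¹
  map_add' p q := by simp only [Pi.add_apply]; ring
  map_smul' c p := by simp only [Pi.smul_apply, smul_eq_mul, RingHom.id_apply]; ring

def kerFun'' (x : ℝ) : (Fin 4 → ℂ) →ₗ[ℂ] ℂ where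
  toFun p := p 0 * 2 + p 1 * (2 * (Real.log x : ℂ) + 3) - p 3 * ((x : ℂ) ^ 2)⁻¹
  map_add' p q := by simp only [Pi.add_apply]; ring
  map_smul' c p := by simp only [Pi.smul_apply, smul_eq_mul, RingHom.id_apply]; ring

def kerJet (x : ℝ) : (Fin 4 → ℂ) →ₗ[ℂ] ℂ × ℂ × ℂ :=
  (kerFun x).prod ((kerFun' x).prod (kerFun'' x))

theorem kerFun_apply (x : ℝ) (p : Fin 4 → ℂ) : kerFun x p =
    p 0 * (x : ℂ) ^ 2 + p 1 * (x : ℂ) ^ 2 * (Real.log x : ℂ) + p 2 + p 3 * (Real.log x : ℂ) :=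
  rfl

theorem kerFun'_apply (x : ℝ) (p : Fin 4 → ℂ) :
    kerFun' x p = p 0 * (2 * x) + p 1 * (2 * x * (Real.log x : ℂ) + x) + p 3 * (x : ℂ)⁻¹ :=
  rfl

theorem kerFun''_apply (x : ℝ) (p : Fin 4 → ℂ) :
    kerFun'' x p = p 0 * 2 + p 1 * (2 * (Real.log x : ℂ) + 3) - p 3 * ((x : ℂ) ^ 2)⁻¹ :=
  rfl

theorem kerJet_apply (x : ℝ) (p : Fin 4 → ℂ) :
    kerJet x p = (kerFun x p, kerFun' x p, kerFun'' x p) :=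
  rfl

theorem hasDerivAt_kerFun (p : Fin 4 → ℂ) {x : ℝ} (hx : x ≠ 0) :
    HasDerivAt (fun y => kerFun y p) (kerFun' x p) x := by
  have hX : HasDerivAt (fun y : ℝ => (y : ℂ)) 1 x := (hasDerivAt_id x).ofReal_comp
  have hL := (Real.hasDerivAt_log hx).ofReal_comp
  have hx' : (x : ℂ) ≠ 0 := by exact_mod_cast hx
  refine (((((hX.pow 2).const_mul (p 0)).add (((hX.pow 2).const_mul (p 1)).mul hL)).add_const
    (p 2)).add (hL.const_mul (p 3))).congr_deriv ?_
  simp only [kerFun'_apply, Pi.pow_apply]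
  push_cast
  field_simp

theorem hasDerivAt_kerFun' (p : Fin 4 → ℂ) {x : ℝ} (hx : x ≠ 0) :
    HasDerivAt (fun y => kerFun' y p) (kerFun'' x p) x := by
  have hX : HasDerivAt (fun y : ℝ => (y : ℂ)) 1 x := (hasDerivAt_id x).ofReal_comp
  have hL := (Real.hasDerivAt_log hx).ofReal_comp
  have hx' : (x : ℂ) ≠ 0 := by exact_mod_cast hx
  have hI := (hasDerivAt_inv hx').comp_ofReal
  refine ((((hX.const_mul 2).const_mul (p 0)).add ((((hX.const_mul 2).mul hL).add hX).const_mul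
    (p 1))).add (hI.const_mul (p 3))).congr_deriv ?_
  rw [kerFun''_apply]
  push_cast
  field_simp
  ring

theorem continuousAt_kerFun'' (p : Fin 4 → ℂ) {x : ℝ} (hx : x ≠ 0) :
    ContinuousAt (fun y => kerFun'' y p) x := by
  have hL : ContinuousAt (fun y : ℝ => (Real.log y : ℂ)) x :=
    Complex.continuous_ofReal.continuousAt.comp (Real.continuousAt_log hx)
  have hx2 : ((x : ℂ) ^ 2) ≠ 0 := by exact_mod_cast pow_ne_zero 2 hx
  simp only [kerFun''_apply]
  fun_prop (disch := exact hx2)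

theorem continuous_kerFun {p : Fin 4 → ℂ} (hp : p 3 = 0) : Continuous fun x => kerFun x p := by
  have hm : Continuous fun x : ℝ => ((x * Real.log x : ℝ) : ℂ) :=
    Complex.continuous_ofReal.comp Real.continuous_mul_log
  have key : (fun x => kerFun x p) =
      fun x : ℝ => p 0 * (x : ℂ) ^ 2 + p 1 * x * ((x * Real.log x : ℝ) : ℂ) + p 2 := by
    funext x
    simp only [kerFun_apply, hp]
    push_cast
    ring
  rw [key]
  fun_prop

theorem contDiffOn_kerFun (p : Fin 4 → ℂ) : ContDiffOn ℝ 2 (fun x => kerFun x p) (Ioi 0) :=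
  contDiffOn_two_of_hasDerivAt isOpen_Ioi (fun _ hx => hasDerivAt_kerFun p (ne_of_gt hx))
    (fun _ hx => hasDerivAt_kerFun' p (ne_of_gt hx))
    fun _ hx => (continuousAt_kerFun'' p (ne_of_gt hx)).continuousWithinAt

theorem contDiffOn_indicator_kerFun {t : ℝ} (ht : 0 < t) {p : Fin 4 → ℂ} (hp : kerJet t p = 0) :
    ContDiffOn ℝ 2 ((Ici t).indicator fun x => kerFun x p) (Ioi 0) := by
  simp only [kerJet_apply, Prod.mk_eq_zero] at hp
  exact contDiffOn_two_of_hasDerivAt isOpen_Ioi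
    (fun _ _ => hasDerivAt_indicator_Ici (fun hx => hasDerivAt_kerFun p (ht.trans_le hx).ne')
      hp.1 hp.2.1)
    (fun _ _ => hasDerivAt_indicator_Ici (fun hx => hasDerivAt_kerFun' p (ht.trans_le hx).ne')
      hp.2.1 hp.2.2)
    fun _ _ => (continuousAt_indicator_Ici
      (fun hx => continuousAt_kerFun'' p (ht.trans_le hx).ne') hp.2.2).continuousWithinAt

def kerLap (x : ℝ) (p : Fin 4 → ℂ) : ℂ := 4 * (p 0 + p 1) + 4 * p 1 * (Real.log x : ℂ)

theorem kerFun''_add_kerFun'_div {x : ℝ} (hx : x ≠ 0) (p : Fin 4 → ℂ) :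
    kerFun'' x p + kerFun' x p / x = kerLap x p := by
  have hx' : (x : ℂ) ≠ 0 := by exact_mod_cast hx
  rw [kerFun''_apply, kerFun'_apply, kerLap]
  field_simp
  ring

def energy (p : Fin 4 → ℂ) (x : ℝ) : ℝ :=
  (x * kerFun' x p * conj (kerLap x p) - 4 * conj (p 1) * kerFun x p).re

theorem hasDerivAt_energy (p : Fin 4 → ℂ) {x : ℝ} (hx : x ≠ 0) :
    HasDerivAt (energy p) (x * Complex.normSq (kerLap x p)) x := by
  have hx' : (x : ℂ) ≠ 0 := by exact_mod_cast hx
  have hX : HasDerivAt (fun y : ℝ => (y : ℂ)) 1 x := (hasDerivAt_id x).ofReal_comp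
  have hLap : HasDerivAt (fun y => conj (kerLap y p)) (conj (4 * p 1 * (x : ℂ)⁻¹)) x := by
    have hL := (Real.hasDerivAt_log hx).ofReal_comp
    push_cast at hL
    exact ((hL.const_mul (4 * p 1)).const_add (4 * (p 0 + p 1))).star
  have hG := ((hX.mul (hasDerivAt_kerFun' p hx)).mul hLap).sub
    ((hasDerivAt_kerFun p hx).const_mul (4 * conj (p 1)))
  have hval : (1 * kerFun' x p + x * kerFun'' x p) * conj (kerLap x p) +
      x * kerFun' x p * conj (4 * p 1 * (x : ℂ)⁻¹) - 4 * conj (p 1) * kerFun' x p =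
      ((x * Complex.normSq (kerLap x p) : ℝ) : ℂ) := by
    rw [Complex.ofReal_mul, ← Complex.mul_conj, ← kerFun''_add_kerFun'_div hx]
    simp only [map_mul, map_inv₀, Complex.conj_ofReal, map_ofNat]
    field_simp
    ring
  exact Complex.reCLM.hasFDerivAt.comp_hasDerivAt x (hG.congr_deriv hval)

theorem continuous_energy {p : Fin 4 → ℂ} (hp : p 3 = 0) : Continuous (energy p) := by
  have hm : Continuous fun x : ℝ => ((x * Real.log x : ℝ) : ℂ) :=
    Complex.continuous_ofReal.comp Real.continuous_mul_log
  -- with `d = 0`, the logarithm only enters through `x ln x`, which is continuous at `0`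
  have key : energy p = fun x : ℝ => ((((2 * p 0 + p 1) * (x : ℂ) ^ 2 +
      2 * p 1 * x * ((x * Real.log x : ℝ) : ℂ)) * conj (4 * (p 0 + p 1)) +
      ((2 * p 0 + p 1) * x + 2 * p 1 * ((x * Real.log x : ℝ) : ℂ)) * (4 * conj (p 1)) *
        ((x * Real.log x : ℝ) : ℂ) -
      4 * conj (p 1) * (p 0 * (x : ℂ) ^ 2 + p 1 * x * ((x * Real.log x : ℝ) : ℂ) + p 2))).re := by
    funext x
    simp only [energy, kerFun'_apply, kerFun_apply, kerLap, hp, map_add, map_mul,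
      Complex.conj_ofReal, map_ofNat]
    congr 1
    push_cast
    ring
  rw [key]
  fun_prop

theorem energy_monotoneOn (p : Fin 4 → ℂ) {A B : ℝ} (hA : 0 ≤ A)
    (hcont : ContinuousOn (energy p) (Icc A B)) : MonotoneOn (energy p) (Icc A B) := by
  refine monotoneOn_of_deriv_nonneg (convex_Icc A B) hcont ?_ ?_ <;> rw [interior_Icc]
  · exact fun x hx =>
      (hasDerivAt_energy p (hA.trans_lt hx.1).ne').differentiableAt.differentiableWithinAt
  · intro x hx
    rw [(hasDerivAt_energy p (hA.trans_lt hx.1).ne').deriv]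
    exact mul_nonneg (hA.trans hx.1.le) (Complex.normSq_nonneg _)

theorem kerLap_eq_zero_of_energy_eq {p : Fin 4 → ℂ} {A B : ℝ} (hA : 0 ≤ A)
    (hcont : ContinuousOn (energy p) (Icc A B)) (hE : energy p A = energy p B) :
    ∀ x ∈ Ioo A B, kerLap x p = 0 := by
  intro x hx
  have hmono := energy_monotoneOn p hA hcont
  have hAB : A ≤ B := hx.1.le.trans hx.2.le
  have hconst : EqOn (energy p) (fun _ => energy p A) (Icc A B) := fun y hy =>
    le_antisymm (hE ▸ hmono hy (right_mem_Icc.2 hAB) hy.2) (hmono (left_mem_Icc.2 hAB) hy hy.1)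
  have hderiv : HasDerivAt (energy p) 0 x :=
    (hasDerivAt_const x _).congr_of_eventuallyEq
      (eventually_of_mem (Icc_mem_nhds hx.1 hx.2) hconst)
  have := (hasDerivAt_energy p (hA.trans_lt hx.1).ne').unique hderiv
  simpa [(hA.trans_lt hx.1).ne'] using this

theorem coeffs_eq_zero_of_kerLap_eq_zero {p : Fin 4 → ℂ} {A B : ℝ} (hA : 0 ≤ A) (hAB : A < B)
    (h : ∀ x ∈ Ioo A B, kerLap x p = 0) : p 0 = 0 ∧ p 1 = 0 := by
  obtain ⟨x, hAx, hxB⟩ := exists_between hAB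
  obtain ⟨y, hxy, hyB⟩ := exists_between hxB
  have hx := h x ⟨hAx, hxB⟩
  have hy := h y ⟨hAx.trans hxy, hyB⟩
  rw [kerLap] at hx hy
  have hlog : (Real.log x : ℂ) - Real.log y ≠ 0 := by
    exact_mod_cast sub_ne_zero.2 (Real.log_lt_log (hA.trans_lt hAx) hxy).ne
  have hb : p 1 = 0 := by
    have : 4 * p 1 * ((Real.log x : ℂ) - Real.log y) = 0 := by linear_combination hx - hy
    simpa [hlog] using this
  refine ⟨?_, hb⟩
  rw [hb] at hx
  linear_combination hx / 4

theorem coeffs_eq_zero_of_energy_chain {n : ℕ} {t : ℕ → ℝ} (ht0 : t 0 = 0)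
    (ht : ∀ j < n, t j < t (j + 1)) {P : ℕ → Fin 4 → ℂ} (hP : P 0 3 = 0)
    (hstart : energy (P 0) 0 = 0) (hend : energy (P n) (t n) = 0)
    (hjoin : ∀ j < n, energy (P j) (t (j + 1)) = energy (P (j + 1)) (t (j + 1))) :
    ∀ j < n, P j 0 = 0 ∧ P j 1 = 0 := by
  have htmono : StrictMonoOn t (Iic n) :=
    strictMonoOn_of_lt_add_one ordConnected_Iic fun j _ _ hj => ht j hj
  have ht_nonneg : ∀ j ≤ n, 0 ≤ t j := fun j hj =>
    ht0 ▸ htmono.monotoneOn (by simp) (by simpa using hj) (Nat.zero_le j)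
  have hcont : ∀ j < n, ContinuousOn (energy (P j)) (Icc (t j) (t (j + 1))) := by
    intro j hj
    rcases Nat.eq_zero_or_pos j with rfl | hj0
    · exact (continuous_energy hP).continuousOn
    · have htj : 0 < t j := ht0 ▸ htmono (by simp) (by simpa using hj.le) hj0
      exact fun x hx =>
        (hasDerivAt_energy _ (htj.trans_le hx.1).ne').continuousAt.continuousWithinAt
  -- the energy at the left end of each piece increases along the chain from `0` to `0`
  have hstep : ∀ j < n, energy (P j) (t j) ≤ energy (P (j + 1)) (t (j + 1)) := fun j hj =>
    (energy_monotoneOn _ (ht_nonneg j hj.le) (hcont j hj) (left_mem_Icc.2 (ht j hj).le)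
      (right_mem_Icc.2 (ht j hj).le) (ht j hj).le).trans_eq (hjoin j hj)
  have hs : MonotoneOn (fun j => energy (P j) (t j)) (Iic n) :=
    monotoneOn_of_le_add_one ordConnected_Iic fun j _ _ hj => hstep j hj
  have hzero : ∀ j ≤ n, energy (P j) (t j) = 0 := fun j hj => le_antisymm
    (hend ▸ hs hj (mem_Iic.2 le_rfl) hj)
    (by simpa [ht0, hstart] using hs (Nat.zero_le n) hj (Nat.zero_le j))
  intro j hj
  refine coeffs_eq_zero_of_kerLap_eq_zero (ht_nonneg j hj.le) (ht j hj)
    (kerLap_eq_zero_of_energy_eq (ht_nonneg j hj.le) (hcont j hj) ?_)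
  rw [hzero j hj.le, hjoin j hj, hzero (j + 1) hj]

theorem energy_eq_of_kerJet_eq {p q : Fin 4 → ℂ} {x : ℝ} (hx : x ≠ 0)
    (hpq : kerJet x p = kerJet x q) (hq : kerFun x q = 0) : energy p x = energy q x := by
  simp only [kerJet_apply, Prod.mk.injEq] at hpq
  obtain ⟨h0, h1, h2⟩ := hpq
  have hlap : kerLap x p = kerLap x q := by
    rw [← kerFun''_add_kerFun'_div hx, ← kerFun''_add_kerFun'_div hx, h1, h2]
  rw [energy, energy, h0, h1, hlap, hq]
  simp

def knot (r : ℕ → ℝ) (j : ℕ) : ℝ := if j = 0 then 0 else r j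

@[simp] theorem knot_zero (r : ℕ → ℝ) : knot r 0 = 0 := rfl

@[simp] theorem knot_succ (r : ℕ → ℝ) (j : ℕ) : knot r (j + 1) = r (j + 1) := rfl

section Knots

variable {n : ℕ} {r : ℕ → ℝ}

theorem strictMonoOn_knot (hpos : 0 < r 1) (hmono : ∀ j, 1 ≤ j → j < n → r j < r (j + 1)) :
    StrictMonoOn (knot r) (Iic n) := by
  refine strictMonoOn_of_lt_add_one ordConnected_Iic fun j _ _ hj => ?_
  rcases Nat.eq_zero_or_pos j with rfl | hj0
  · simpa [knot] using hpos
  · simpa [knot, hj0.ne'] using hmono j hj0 hj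

theorem knot_pos (hpos : 0 < r 1) (hmono : ∀ j, 1 ≤ j → j < n → r j < r (j + 1)) {j : ℕ}
    (hj0 : 1 ≤ j) (hjn : j ≤ n) : 0 < r j := by
  simpa [knot, (Nat.one_le_iff_ne_zero.1 hj0)] using
    strictMonoOn_knot hpos hmono (mem_Iic.2 (Nat.zero_le n)) (mem_Iic.2 hjn) hj0

end Knots

/-- `P j` holds the coefficients of the piece of a spline on `(knot r j, r (j + 1))`, `j < n`,
and `P n` those of the piece on `(r n, ∞)`. -/
structure IsSplineCoeffs (n : ℕ) (r : ℕ → ℝ) (P : ℕ → Fin 4 → ℂ) : Prop where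
  left : P 0 3 = 0
  right : P n 0 = 0 ∧ P n 1 = 0
  join : ∀ j < n, kerJet (r (j + 1)) (P j) = kerJet (r (j + 1)) (P (j + 1))

theorem IsSplineCoeffs.eq_zero {n : ℕ} {r : ℕ → ℝ} {P : ℕ → Fin 4 → ℂ}
    (hP : IsSplineCoeffs n r P) (hpos : 0 < r 1)
    (hmono : ∀ j, 1 ≤ j → j < n → r j < r (j + 1)) (h0 : P 0 2 = 0)
    (hval : ∀ j < n, kerFun (r (j + 1)) (P (j + 1)) = 0) : ∀ j ≤ n, P j = 0 := by
  have hr : ∀ j < n, r (j + 1) ≠ 0 := fun j hj => (knot_pos hpos hmono (by omega) hj).ne'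
  have hab : ∀ j ≤ n, P j 0 = 0 ∧ P j 1 = 0 := by
    have hchain := coeffs_eq_zero_of_energy_chain (t := knot r) rfl
      (fun j hj => strictMonoOn_knot hpos hmono (mem_Iic.2 hj.le) (mem_Iic.2 hj) j.lt_succ_self)
      hP.left (by simp [energy, kerFun_apply, h0])
      (by simp [energy, kerLap, hP.right.1, hP.right.2])
      (fun j hj => by simpa using energy_eq_of_kerJet_eq (hr j hj) (hP.join j hj) (hval j hj))
    intro j hj
    rcases hj.lt_or_eq with hj | rfl
    exacts [hchain j hj, hP.right]
  have hd : ∀ j ≤ n, P j 3 = 0 := by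
    intro j hj
    induction j with
    | zero => exact hP.left
    | succ j ih =>
      have h1 := congrArg (fun v => v.2.1) (hP.join j hj)
      simpa [kerJet_apply, kerFun'_apply, (hab j (by omega)).1, (hab j (by omega)).2,
        (hab (j + 1) hj).1, (hab (j + 1) hj).2, ih (by omega), hr j hj] using h1.symm
  have hc : ∀ j ≤ n, P j 2 = 0 := by
    rintro (_ | j) hj
    · exact h0
    · simpa [kerFun_apply, (hab (j + 1) hj).1, (hab (j + 1) hj).2, hd (j + 1) hj] using
        hval j hj
  intro j hj
  ext i
  fin_cases i
  exacts [(hab j hj).1, (hab j hj).2, hc j hj, hd j hj]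

/-- The spline with pieces `P 0, …, P n`: the first piece, corrected from each knot on by the
difference of the two pieces meeting there. -/
def spline (n : ℕ) (r : ℕ → ℝ) (P : ℕ → Fin 4 → ℂ) (x : ℝ) : ℂ :=
  kerFun x (P 0) +
    ∑ j ∈ Finset.range n, (Ici (r (j + 1))).indicator (fun y => kerFun y (P (j + 1) - P j)) x

section Spline

variable {n : ℕ} {r : ℕ → ℝ} {P Q : ℕ → Fin 4 → ℂ}

theorem spline_sub (x : ℝ) : spline n r (P - Q) x = spline n r P x - spline n r Q x := by
  simp only [spline, indicator_apply, Pi.sub_apply, map_sub]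
  rw [add_sub_add_comm, ← Finset.sum_sub_distrib]
  congr 1
  refine Finset.sum_congr rfl fun j _ => ?_
  split_ifs <;> ring

theorem spline_eq_kerFun (hpos : 0 < r 1) (hmono : ∀ j, 1 ≤ j → j < n → r j < r (j + 1))
    {j : ℕ} (hjn : j ≤ n) {x : ℝ} (hl : 1 ≤ j → r j ≤ x) (hr : j < n → x < r (j + 1)) :
    spline n r P x = kerFun x (P j) := by
  have hknot := (strictMonoOn_knot hpos hmono).monotoneOn
  have hmem : ∀ i < n, x ∈ Ici (r (i + 1)) ↔ i < j := by
    intro i hi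
    refine ⟨fun hx => not_le.1 fun hji => ?_, fun hij => ?_⟩
    · have := hknot (mem_Iic.2 (Nat.succ_le_of_lt (hji.trans_lt hi))) (mem_Iic.2 hi)
        (Nat.succ_le_succ hji)
      simp only [knot_succ] at this
      exact (hr (hji.trans_lt hi)).not_ge (this.trans hx)
    · have := hknot (mem_Iic.2 hi) (mem_Iic.2 hjn) hij
      simp only [knot, (Nat.zero_lt_of_lt hij).ne', if_false] at this
      exact this.trans (hl (Nat.one_le_of_lt hij))
  calc spline n r P x = kerFun x (P 0) + ∑ i ∈ Finset.range j, kerFun x (P (i + 1) - P i) := by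
        rw [spline, ← Finset.sum_subset (Finset.range_subset_range.2 hjn) fun i hi hij =>
          indicator_of_notMem (mt (hmem i (Finset.mem_range.1 hi)).1 (by simpa using hij)) _]
        refine congrArg _ (Finset.sum_congr rfl fun i hi => indicator_of_mem ?_ _)
        exact (hmem i ((Finset.mem_range.1 hi).trans_le hjn)).2 (Finset.mem_range.1 hi)
    _ = kerFun x (P j) := by rw [← map_sum, Finset.sum_range_sub, ← map_add, add_sub_cancel]

theorem spline_zero (hpos : 0 < r 1) (hmono : ∀ j, 1 ≤ j → j < n → r j < r (j + 1)) :
    spline n r P 0 = P 0 2 := by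
  rw [spline_eq_kerFun hpos hmono (Nat.zero_le n) (by omega) fun _ => hpos]
  simp [kerFun_apply]

theorem spline_knot (hpos : 0 < r 1) (hmono : ∀ j, 1 ≤ j → j < n → r j < r (j + 1)) {j : ℕ}
    (hj : j < n) : spline n r P (r (j + 1)) = kerFun (r (j + 1)) (P (j + 1)) :=
  spline_eq_kerFun hpos hmono hj (fun _ => le_rfl) fun h => hmono (j + 1) (by omega) h

theorem IsSplineCoeffs.isBLSpline (hP : IsSplineCoeffs n r P) (hpos : 0 < r 1)
    (hmono : ∀ j, 1 ≤ j → j < n → r j < r (j + 1)) : IsBLSpline n r (spline n r P) where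
  pieces j hj hjn := ⟨P j 0, P j 1, P j 2, P j 3, fun x hx =>
    spline_eq_kerFun hpos hmono (by omega) (fun _ => hx.1.le) fun _ => hx.2⟩
  left := ⟨P 0 0, P 0 1, P 0 2, fun x hx => by
    rw [spline_eq_kerFun hpos hmono (Nat.zero_le n) (by omega) fun _ => hx.2, kerFun_apply,
      hP.left, zero_mul, add_zero]⟩
  right := ⟨P n 2, P n 3, fun x hx => by
    rw [spline_eq_kerFun hpos hmono le_rfl (fun _ => le_of_lt hx) (by omega), kerFun_apply,
      hP.right.1, hP.right.2]
    ring⟩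
  smooth := (contDiffOn_kerFun (P 0)).add <| ContDiffOn.sum fun j hj =>
    contDiffOn_indicator_kerFun (knot_pos hpos hmono (by omega) (Finset.mem_range.1 hj))
      (by rw [map_sub, sub_eq_zero, hP.join j (Finset.mem_range.1 hj)])
  cont0 := ((continuous_kerFun hP.left).continuousAt.congr (eventually_of_mem (Iio_mem_nhds hpos)
    fun x hx => (spline_eq_kerFun hpos hmono (Nat.zero_le n) (by omega) fun _ => hx).symm)
    ).continuousWithinAt

end Spline

def splineDefect (n : ℕ) (r : ℕ → ℝ) :
    (ℕ → Fin 4 → ℂ) →ₗ[ℂ] (Fin n → ℂ × ℂ × ℂ) × ℂ × ℂ × ℂ where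
  toFun P := (fun j => kerJet (r (j + 1)) (P (j + 1) - P j), P 0 3, P n 0, P n 1)
  map_add' P Q := by
    refine Prod.ext (funext fun j => ?_) rfl
    simp only [Pi.add_apply, add_sub_add_comm, map_add]
    rfl
  map_smul' c P := by
    refine Prod.ext (funext fun j => ?_) rfl
    simp only [Pi.smul_apply, ← smul_sub, map_smul, RingHom.id_apply]
    rfl

def splineData (n : ℕ) (r : ℕ → ℝ) : (ℕ → Fin 4 → ℂ) →ₗ[ℂ] ℂ × (Fin n → ℂ) where
  toFun P := (P 0 2, fun j => kerFun (r (j + 1)) (P (j + 1)))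
  map_add' P Q := by ext <;> simp
  map_smul' c P := by ext <;> simp

section Coeffs

variable {n : ℕ} {r : ℕ → ℝ} {P Q : ℕ → Fin 4 → ℂ}

theorem isSplineCoeffs_iff : IsSplineCoeffs n r P ↔ splineDefect n r P = 0 := by
  simp only [splineDefect, LinearMap.coe_mk, AddHom.coe_mk, Prod.mk_eq_zero, funext_iff,
    Pi.zero_apply, map_sub, sub_eq_zero, Fin.forall_iff]
  exact ⟨fun h => ⟨fun j hj => (h.join j hj).symm, h.left, h.right⟩,
    fun h => ⟨h.2.1, h.2.2, fun j hj => (h.1 j hj).symm⟩⟩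

theorem exists_isSplineCoeffs (hpos : 0 < r 1) (hmono : ∀ j, 1 ≤ j → j < n → r j < r (j + 1))
    (α : ℂ) (ν : ℕ → ℂ) : ∃ P, IsSplineCoeffs n r P ∧ P 0 2 = α ∧
      ∀ j < n, kerFun (r (j + 1)) (P (j + 1)) = ν (j + 1) := by
  let ι : (Fin (n + 1) → Fin 4 → ℂ) →ₗ[ℂ] ℕ → Fin 4 → ℂ :=
    LinearMap.funLeft ℂ (Fin 4 → ℂ) fun k => Fin.clamp k n
  have hinj : LinearMap.ker (splineDefect n r ∘ₗ ι) ⊓ LinearMap.ker (splineData n r ∘ₗ ι) = ⊥ := by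
    rw [eq_bot_iff]
    rintro v ⟨hv, hv'⟩
    have h := (isSplineCoeffs_iff.2 hv).eq_zero hpos hmono (congrArg Prod.fst hv')
      fun j hj => congrFun (congrArg Prod.snd hv') ⟨j, hj⟩
    ext k : 1
    have hk : Fin.clamp k n = k := Fin.ext (min_eq_left (Nat.lt_succ_iff.1 k.isLt))
    simpa [ι, hk] using h k (Nat.lt_succ_iff.1 k.isLt)
  have hdim : Module.finrank ℂ ((Fin n → ℂ × ℂ × ℂ) × ℂ × ℂ × ℂ) +
      Module.finrank ℂ (ℂ × (Fin n → ℂ)) ≤ Module.finrank ℂ (Fin (n + 1) → Fin 4 → ℂ) := by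
    simp only [Module.finrank_prod, Module.finrank_pi_fintype,
      Module.finrank_self, Finset.sum_const, Finset.card_univ, Fintype.card_fin, smul_eq_mul]
    omega
  obtain ⟨v, hv, hdata⟩ := LinearMap.exists_mem_ker_apply_eq (splineDefect n r ∘ₗ ι)
    (splineData n r ∘ₗ ι) hinj hdim (α, fun j => ν (j + 1))
  exact ⟨ι v, isSplineCoeffs_iff.2 hv, congrArg Prod.fst hdata,
    fun j hj => congrFun (congrArg Prod.snd hdata) ⟨j, hj⟩⟩

theorem IsSplineCoeffs.spline_eq (hP : IsSplineCoeffs n r P) (hQ : IsSplineCoeffs n r Q)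
    (hpos : 0 < r 1) (hmono : ∀ j, 1 ≤ j → j < n → r j < r (j + 1))
    (h0 : spline n r P 0 = spline n r Q 0)
    (hknots : ∀ j < n, spline n r P (r (j + 1)) = spline n r Q (r (j + 1))) :
    spline n r P = spline n r Q := by
  have hPQ : IsSplineCoeffs n r (P - Q) := by
    rw [isSplineCoeffs_iff, map_sub, isSplineCoeffs_iff.1 hP, isSplineCoeffs_iff.1 hQ, sub_zero]
  have hz := hPQ.eq_zero hpos hmono
    (by rw [← spline_zero (P := P - Q) hpos hmono, spline_sub, h0, sub_self])
    fun j hj => by rw [← spline_knot (P := P - Q) hpos hmono hj, spline_sub, hknots j hj, sub_self]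
  funext x
  rw [← sub_eq_zero, ← spline_sub, spline, hz 0 (Nat.zero_le n), map_zero, zero_add]
  refine Finset.sum_eq_zero fun j hj => ?_
  have hj := Finset.mem_range.1 hj
  simp [hz j hj.le, hz (j + 1) hj]

end Coeffs

def jet (η : ℝ → ℂ) (y : ℝ) : ℂ × ℂ × ℂ := (η y, deriv η y, deriv (deriv η) y)

theorem continuousOn_jet {η : ℝ → ℂ} {s : Set ℝ} (hs : IsOpen s) (hη : ContDiffOn ℝ 2 η s) :
    ContinuousOn (jet η) s := by
  have hη' : ContDiffOn ℝ 1 (deriv η) s := hη.deriv_of_isOpen hs (by norm_num)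
  exact hη.continuousOn.prodMk
    (hη'.continuousOn.prodMk (hη'.continuousOn_deriv_of_isOpen hs le_rfl))

theorem continuousAt_kerJet (p : Fin 4 → ℂ) {x : ℝ} (hx : x ≠ 0) :
    ContinuousAt (fun y => kerJet y p) x :=
  (hasDerivAt_kerFun p hx).continuousAt.prodMk
    ((hasDerivAt_kerFun' p hx).continuousAt.prodMk (continuousAt_kerFun'' p hx))

theorem eqOn_jet {η : ℝ → ℂ} {U : Set ℝ} (hU : IsOpen U) (hU0 : U ⊆ Ioi 0) {p : Fin 4 → ℂ}
    (h : EqOn η (fun y => kerFun y p) U) : EqOn (jet η) (fun y => kerJet y p) U := by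
  have h1 : EqOn (deriv η) (fun y => kerFun' y p) U := fun y hy =>
    (h.deriv hU hy).trans (hasDerivAt_kerFun p (ne_of_gt (hU0 hy))).deriv
  have h2 : EqOn (deriv (deriv η)) (fun y => kerFun'' y p) U := fun y hy =>
    (h1.deriv hU hy).trans (hasDerivAt_kerFun' p (ne_of_gt (hU0 hy))).deriv
  exact fun y hy => by simp only [jet, kerJet_apply, h hy, h1 hy, h2 hy]

theorem kerJet_eq_of_eventuallyEq {η : ℝ → ℂ} {x : ℝ} (hx : 0 < x)
    (hη : ContDiffOn ℝ 2 η (Ioi 0)) {p q : Fin 4 → ℂ}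
    (hp : ∀ᶠ y in 𝓝[<] x, η y = kerFun y p) (hq : ∀ᶠ y in 𝓝[>] x, η y = kerFun y q) :
    kerJet x p = kerJet x q := by
  obtain ⟨a, hax, ha⟩ := mem_nhdsLT_iff_exists_Ioo_subset.1 hp
  obtain ⟨b, hxb, hb⟩ := mem_nhdsGT_iff_exists_Ioo_subset.1 hq
  have hL := eqOn_jet isOpen_Ioo (fun y hy => (le_max_right a 0).trans_lt hy.1)
    fun y hy => ha ⟨(le_max_left a 0).trans_lt hy.1, hy.2⟩
  have hR := eqOn_jet isOpen_Ioo (fun y hy => hx.trans hy.1) hb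
  have hJ := ((continuousOn_jet isOpen_Ioi hη).continuousAt (Ioi_mem_nhds hx)).tendsto
  calc kerJet x p = jet η x :=
        tendsto_nhds_unique_of_eventuallyEq
          ((continuousAt_kerJet p hx.ne').tendsto.mono_left nhdsWithin_le_nhds)
          (hJ.mono_left nhdsWithin_le_nhds)
          (eventually_of_mem (Ioo_mem_nhdsLT (max_lt hax hx)) fun y hy => (hL hy).symm)
    _ = kerJet x q :=
        tendsto_nhds_unique_of_eventuallyEq (hJ.mono_left nhdsWithin_le_nhds)
          ((continuousAt_kerJet q hx.ne').tendsto.mono_left nhdsWithin_le_nhds)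
          (eventually_of_mem (Ioo_mem_nhdsGT hxb) hR)

theorem exists_bracket (n : ℕ) (r : ℕ → ℝ) (x : ℝ) :
    ∃ j ≤ n, (1 ≤ j → r j ≤ x) ∧ (j < n → x < r (j + 1)) := by
  classical
  refine ⟨Nat.findGreatest (fun i => i = 0 ∨ r i ≤ x) n, Nat.findGreatest_le n,
    fun h => ?_, fun h => not_le.1 fun hx => ?_⟩
  · exact (Nat.findGreatest_spec (P := fun i => i = 0 ∨ r i ≤ x) (Nat.zero_le n)
      (Or.inl rfl)).resolve_left (by omega)
  · exact Nat.findGreatest_is_greatest (Nat.lt_succ_self _) h (Or.inr hx)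

def pieceSet (n : ℕ) (r : ℕ → ℝ) (j : ℕ) : Set ℝ := {x | knot r j < x ∧ (j < n → x < r (j + 1))}

section IsBLSpline

variable {n : ℕ} {r : ℕ → ℝ} {η : ℝ → ℂ}

theorem _root_.IsBLSpline.continuousOn (hη : IsBLSpline n r η) : ContinuousOn η (Ici 0) := by
  intro x hx
  rcases (mem_Ici.1 hx).eq_or_lt with rfl | hx
  · exact hη.cont0
  · exact (hη.smooth.continuousOn.continuousAt (Ioi_mem_nhds hx)).continuousWithinAt

theorem _root_.IsBLSpline.exists_pieces (hη : IsBLSpline n r η) (hn : 1 ≤ n) :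
    ∃ P : ℕ → Fin 4 → ℂ, P 0 3 = 0 ∧ P n 0 = 0 ∧ P n 1 = 0 ∧
      ∀ j ≤ n, EqOn η (fun x => kerFun x (P j)) (pieceSet n r j) := by
  obtain ⟨a₀, b₀, c₀, hleft⟩ := hη.left
  obtain ⟨cₙ, dₙ, hright⟩ := hη.right
  choose! a b c d hmid using hη.pieces
  have hn0 : n ≠ 0 := by omega
  refine ⟨fun j => if j = 0 then ![a₀, b₀, c₀, 0] else if j < n then ![a j, b j, c j, d j]
    else ![0, 0, cₙ, dₙ], by simp, by simp [hn0], by simp [hn0], ?_⟩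
  intro j hj x hx
  rcases Nat.eq_zero_or_pos j with rfl | hj0
  · simpa [kerFun_apply] using hleft x ⟨hx.1, hx.2 hn⟩
  simp only [pieceSet, knot, hj0.ne', if_false] at hx
  rcases hj.lt_or_eq with hjn | rfl
  · simpa [kerFun_apply, hj0.ne', hjn] using hmid j hj0 hjn x ⟨hx.1, hx.2 hjn⟩
  · simpa [kerFun_apply, hj0.ne'] using hright x hx.1

theorem _root_.IsBLSpline.exists_isSplineCoeffs (hη : IsBLSpline n r η) (hn : 1 ≤ n)
    (hpos : 0 < r 1) (hmono : ∀ j, 1 ≤ j → j < n → r j < r (j + 1)) :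
    ∃ P, IsSplineCoeffs n r P ∧ EqOn η (spline n r P) (Ici 0) := by
  obtain ⟨P, h3, h0, h1, hP⟩ := hη.exists_pieces hn
  have hjoin : ∀ j < n, kerJet (r (j + 1)) (P j) = kerJet (r (j + 1)) (P (j + 1)) := by
    intro j hj
    have hleft : knot r j < r (j + 1) :=
      strictMonoOn_knot hpos hmono (mem_Iic.2 hj.le) (mem_Iic.2 hj) j.lt_succ_self
    have hright : ∀ᶠ y in 𝓝[>] r (j + 1), y ∈ pieceSet n r (j + 1) := by
      refine Eventually.and (self_mem_nhdsWithin (s := Ioi (r (j + 1)))) ?_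
      by_cases h : j + 1 < n
      · exact mem_of_superset
          (mem_nhdsWithin_of_mem_nhds (Iio_mem_nhds (hmono (j + 1) (by omega) h))) fun y hy _ => hy
      · exact Eventually.of_forall fun y h' => absurd h' h
    exact kerJet_eq_of_eventuallyEq (knot_pos hpos hmono (by omega) hj) hη.smooth
      (eventually_of_mem (Ioo_mem_nhdsLT hleft) fun y hy => hP j hj.le ⟨hy.1, fun _ => hy.2⟩)
      (hright.mono fun y hy => hP (j + 1) hj hy)
  have hPs : IsSplineCoeffs n r P := ⟨h3, ⟨h0, h1⟩, hjoin⟩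
  refine ⟨P, hPs, ?_⟩
  -- both sides are continuous on `[0, ∞)` and agree off the finitely many knots
  have hdense : Ici (0 : ℝ) ⊆ closure (Ioi 0 ∩ (r '' Icc 1 n)ᶜ) := by
    rw [← closure_Ioi]
    exact closure_minimal ((((finite_Icc 1 n).image r).countable.dense_compl ℝ
      ).open_subset_closure_inter isOpen_Ioi) isClosed_closure
  refine EqOn.of_subset_closure ?_ hη.continuousOn (hPs.isBLSpline hpos hmono).continuousOn
    (inter_subset_left.trans Ioi_subset_Ici_self) hdense
  rintro x ⟨hx0, hxK⟩
  obtain ⟨j, hjn, hl, hr⟩ := exists_bracket n r x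
  rw [spline_eq_kerFun hpos hmono hjn hl hr]
  refine hP j hjn ⟨?_, hr⟩
  rcases Nat.eq_zero_or_pos j with rfl | hj0
  · exact hx0
  · simp only [knot, hj0.ne', if_false]
    exact (hl hj0).lt_of_ne fun h => hxK ⟨j, ⟨hj0, hjn⟩, h⟩

end IsBLSpline

end BLSpline

/-- existence and uniqueness of the Beppo Levi `L₀`-spline `σ^A`
interpolating `ν j` at the knots and `α` at `0`. -/
theorem stmt3 (n : ℕ) (r : ℕ → ℝ) (hn : 1 ≤ n) (hpos : 0 < r 1)
    (hmono : ∀ j, 1 ≤ j → j < n → r j < r (j + 1))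
    (α : ℝ) (ν : ℕ → ℝ) :
    ∃ σ : ℝ → ℂ,
      (IsBLSpline n r σ ∧ (∀ j, 1 ≤ j → j ≤ n → σ (r j) = (ν j : ℂ)) ∧ σ 0 = (α : ℂ)) ∧
      ∀ τ : ℝ → ℂ,
        (IsBLSpline n r τ ∧ (∀ j, 1 ≤ j → j ≤ n → τ (r j) = (ν j : ℂ)) ∧ τ 0 = (α : ℂ)) →
        Set.EqOn τ σ (Set.Ici 0) := by
  obtain ⟨P, hP, hP0, hPν⟩ := BLSpline.exists_isSplineCoeffs hpos hmono α fun j => (ν j : ℂ)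
  have hσ0 : BLSpline.spline n r P 0 = α := (BLSpline.spline_zero hpos hmono).trans hP0
  have hσν : ∀ j, 1 ≤ j → j ≤ n → BLSpline.spline n r P (r j) = ν j := by
    rintro (_ | j) hj hjn
    · omega
    · exact (BLSpline.spline_knot hpos hmono hjn).trans (hPν j hjn)
  refine ⟨BLSpline.spline n r P, ⟨hP.isBLSpline hpos hmono, hσν, hσ0⟩, ?_⟩
  rintro τ ⟨hτ, hτν, hτ0⟩
  obtain ⟨Q, hQ, hτQ⟩ := hτ.exists_isSplineCoeffs hn hpos hmono
  have hknot : ∀ j < n, τ (r (j + 1)) = BLSpline.spline n r Q (r (j + 1)) := fun j hj =>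
    hτQ (BLSpline.knot_pos hpos hmono (by omega) hj).le
  rwa [hQ.spline_eq hP hpos hmono (by rw [← hτQ self_mem_Ici, hτ0, hσ0]) fun j hj => by
    rw [← hknot j hj, hτν (j + 1) (by omega) hj, hσν (j + 1) (by omega) hj]] at hτQ
end
end

section
/- Let ρ = {r₁ < … < r_n} be positive knots and let ν₁, …, ν_n be arbitrary real values. Then there exists a unique non-singular Beppo Levi L₀-spline σ^B ∈ S₀(ρ) such that σ^B(r_j) = ν_j for all j ∈ {1,…,n}. -/
open MeasureTheory Set Filter

noncomputable section

/-!
On each of the `n + 1` pieces cut out by the knots a spline is a combination of `x²`, `x² log x`,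
`1` and `log x`, so it is given by `4 (n + 1)` coefficients, subject to four end conditions
(non-singularity at `0`, no `x²` or `x² log x` term at `∞`) and three `C²` gluing conditions at
each of the `n` knots. With the `n` interpolation conditions this is a square linear system, so
existence follows from uniqueness.

Uniqueness is an energy argument. If `σ` vanishes at the knots, then on each piece the density
`x |Δσ|²` (with `Δ` the radial Laplacian) has an explicit antiderivative built from `σ`, `σ'` and
`Δσ`. By the `C²` gluing these antiderivatives telescope, and the remaining boundary terms vanish
at `0` and `∞`. Hence `Δσ = 0` on every piece. This kills the `x²` and `x² log x` coefficients,
and the gluing conditions then force the remaining ones to vanish.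
-/

namespace BeppoLevi

open Complex ComplexConjugate Topology

/-- The element `a x² + b x² log x + c + d log x` of `Ker L₀`, for `q = (a, b, c, d)`. -/
def kerFn (q : Fin 4 → ℂ) (x : ℝ) : ℂ :=
  q 0 * (x : ℂ) ^ 2 + q 1 * (x : ℂ) ^ 2 * (Real.log x : ℂ) + q 2 + q 3 * (Real.log x : ℂ)

def kerFn' (q : Fin 4 → ℂ) (x : ℝ) : ℂ :=
  2 * q 0 * x + q 1 * (2 * x * (Real.log x : ℂ) + x) + q 3 * (x : ℂ)⁻¹

def kerFn'' (q : Fin 4 → ℂ) (x : ℝ) : ℂ :=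
  2 * q 0 + q 1 * (2 * (Real.log x : ℂ) + 3) - q 3 * ((x : ℂ) ^ 2)⁻¹

def kerJet (q : Fin 4 → ℂ) (x : ℝ) : ℂ × ℂ × ℂ := (kerFn q x, kerFn' q x, kerFn'' q x)

section Kernel

variable (q : Fin 4 → ℂ) {x : ℝ}

lemma kerJet_sub (p : Fin 4 → ℂ) (x : ℝ) : kerJet (q - p) x = kerJet q x - kerJet p x := by
  simp only [kerJet, kerFn, kerFn', kerFn'', Pi.sub_apply, Prod.mk_sub_mk]
  exact Prod.ext (by ring) (Prod.ext (by ring) (by ring))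

lemma kerFn_sub (p : Fin 4 → ℂ) (x : ℝ) : kerFn (q - p) x = kerFn q x - kerFn p x :=
  congrArg Prod.fst (kerJet_sub q p x)

lemma hasDerivAt_ofReal_log (hx : x ≠ 0) :
    HasDerivAt (fun y : ℝ => (Real.log y : ℂ)) (x : ℂ)⁻¹ x := by
  simpa using (Real.hasDerivAt_log hx).ofReal_comp

lemma hasDerivAt_kerFn (hx : x ≠ 0) : HasDerivAt (kerFn q) (kerFn' q x) x := by
  have hX : HasDerivAt (fun y : ℝ => (y : ℂ)) 1 x := by simpa using (hasDerivAt_id x).ofReal_comp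
  have hL := hasDerivAt_ofReal_log hx
  have h : HasDerivAt (kerFn q) _ x := ((((hX.pow 2).const_mul (q 0)).add
    (((hX.pow 2).const_mul (q 1)).mul hL)).add_const (q 2)).add (hL.const_mul (q 3))
  convert h using 1
  have : (x : ℂ) ≠ 0 := ofReal_ne_zero.mpr hx
  simp only [kerFn', Pi.pow_apply]
  field_simp
  ring

lemma hasDerivAt_kerFn' (hx : x ≠ 0) : HasDerivAt (kerFn' q) (kerFn'' q x) x := by
  have hX : HasDerivAt (fun y : ℝ => (y : ℂ)) 1 x := by simpa using (hasDerivAt_id x).ofReal_comp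
  have hL := hasDerivAt_ofReal_log hx
  have : (x : ℂ) ≠ 0 := ofReal_ne_zero.mpr hx
  have h : HasDerivAt (kerFn' q) _ x := ((hX.const_mul (2 * q 0)).add
    ((((hX.const_mul 2).mul hL).add hX).const_mul (q 1))).add ((hX.inv this).const_mul (q 3))
  convert h using 1
  simp only [kerFn'']
  field_simp
  ring

lemma continuousAt_kerFn'' (hx : x ≠ 0) : ContinuousAt (kerFn'' q) x := by
  have hL : ContinuousAt (fun y : ℝ => (Real.log y : ℂ)) x :=
    (hasDerivAt_ofReal_log hx).continuousAt
  have : ((x : ℂ) ^ 2) ≠ 0 := pow_ne_zero _ (ofReal_ne_zero.mpr hx)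
  unfold kerFn''
  fun_prop (disch := assumption)

lemma kerFn_of_b_d_eq_zero (hb : q 1 = 0) (hd : q 3 = 0) (x : ℝ) :
    kerFn q x = q 0 * (x : ℂ) ^ 2 + q 2 := by
  simp [kerFn, hb, hd]

end Kernel

def lapKer (q : Fin 4 → ℂ) (x : ℝ) : ℂ := 4 * q 0 + 4 * q 1 + 4 * q 1 * (Real.log x : ℂ)

/-- An antiderivative of the energy density `x |Δη|²` of `η = kerFn q`: integrate by parts using
`(x η')' = x Δη` and `x (Δη)' = 4 b`. -/
def energyPrim (q : Fin 4 → ℂ) (x : ℝ) : ℝ :=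
  ((x : ℂ) * kerFn' q x * conj (lapKer q x) - conj (4 * q 1) * kerFn q x).re

section Energy

variable {q : Fin 4 → ℂ} {x : ℝ}

lemma lapKer_eq (hx : x ≠ 0) : lapKer q x = kerFn'' q x + kerFn' q x / x := by
  have : (x : ℂ) ≠ 0 := ofReal_ne_zero.mpr hx
  simp only [lapKer, kerFn', kerFn'']
  field_simp
  ring

lemma hasDerivAt_energyPrim (hx : 0 < x) :
    HasDerivAt (energyPrim q) (x * ‖lapKer q x‖ ^ 2) x := by
  have hx0 : (x : ℂ) ≠ 0 := ofReal_ne_zero.mpr hx.ne'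
  have hX : HasDerivAt (fun y : ℝ => (y : ℂ)) 1 x := by simpa using (hasDerivAt_id x).ofReal_comp
  have hG : HasDerivAt (fun y => conj (lapKer q y)) (conj (4 * q 1) * (x : ℂ)⁻¹) x := by
    have e : (fun y => conj (lapKer q y))
        = fun y : ℝ => conj (4 * q 0 + 4 * q 1) + conj (4 * q 1) * (Real.log y : ℂ) := by
      funext y
      simp [lapKer]
    rw [e]
    exact ((hasDerivAt_ofReal_log hx.ne').const_mul _).const_add _
  have hg : kerFn' q x + x * kerFn'' q x = x * lapKer q x := by
    rw [lapKer_eq hx.ne']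
    field_simp
    ring
  have hF : HasDerivAt (fun y : ℝ => (y : ℂ) * kerFn' q y * conj (lapKer q y)
      - conj (4 * q 1) * kerFn q y) ((x : ℂ) * (lapKer q x * conj (lapKer q x))) x := by
    refine (((hX.mul (hasDerivAt_kerFn' q hx.ne')).mul hG).sub
      ((hasDerivAt_kerFn q hx.ne').const_mul (conj (4 * q 1)))).congr_deriv ?_
    rw [one_mul, hg, Pi.mul_apply]
    field_simp
    ring
  refine (reCLM.hasFDerivAt.comp_hasDerivAt x hF).congr_deriv ?_
  rw [mul_conj, normSq_eq_norm_sq, ← ofReal_mul, reCLM_apply, ofReal_re]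

lemma energyPrim_eq_of_kerJet_eq {p : Fin 4 → ℂ} (hx : x ≠ 0) (hp : kerFn p x = 0)
    (h : kerJet p x = kerJet q x) : energyPrim p x = energyPrim q x := by
  simp only [kerJet, Prod.mk.injEq] at h
  simp only [energyPrim, lapKer_eq hx, hp, ← h.1, h.2.1, h.2.2, mul_zero]

lemma energyPrim_zero (h1 : q 1 = 0) : energyPrim q 0 = 0 := by
  simp [energyPrim, h1]

lemma energyPrim_eq_zero (h0 : q 0 = 0) (h1 : q 1 = 0) (x : ℝ) : energyPrim q x = 0 := by
  simp [energyPrim, lapKer, h0, h1]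

lemma continuous_energyPrim (h1 : q 1 = 0) (h3 : q 3 = 0) : Continuous (energyPrim q) := by
  have e : energyPrim q = fun x : ℝ => ((x : ℂ) * (2 * q 0 * x) * conj (4 * q 0)).re := by
    funext x
    simp [energyPrim, kerFn', lapKer, h1, h3]
  rw [e]
  fun_prop

lemma monotoneOn_energyPrim {α β : ℝ} (hα : 0 ≤ α) (hc : ContinuousOn (energyPrim q) (Icc α β)) :
    MonotoneOn (energyPrim q) (Icc α β) := by
  have hpos : ∀ x ∈ interior (Icc α β), 0 < x := fun x hx => by
    rw [interior_Icc] at hx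
    exact hα.trans_lt hx.1
  refine monotoneOn_of_deriv_nonneg (convex_Icc α β) hc
    (fun x hx => (hasDerivAt_energyPrim (hpos x hx)).differentiableAt.differentiableWithinAt)
    fun x hx => ?_
  rw [(hasDerivAt_energyPrim (hpos x hx)).deriv]
  exact mul_nonneg (hpos x hx).le (sq_nonneg _)

lemma lapKer_eq_zero_of_energyPrim_le {α β : ℝ} (hα : 0 ≤ α)
    (hc : ContinuousOn (energyPrim q) (Icc α β)) (h : energyPrim q β ≤ energyPrim q α) :
    ∀ x ∈ Ioo α β, lapKer q x = 0 := by
  intro x hx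
  have hmono := monotoneOn_energyPrim hα hc
  have hαβ : α ≤ β := hx.1.le.trans hx.2.le
  have hconst : ∀ y ∈ Ioo α β, energyPrim q y = energyPrim q α := fun y hy =>
    le_antisymm ((hmono (Ioo_subset_Icc_self hy) (right_mem_Icc.2 hαβ) hy.2.le).trans h)
      (hmono (left_mem_Icc.2 hαβ) (Ioo_subset_Icc_self hy) hy.1.le)
  have hderiv : HasDerivAt (energyPrim q) 0 x :=
    (hasDerivAt_const x (energyPrim q α)).congr_of_eventuallyEq
      (eventuallyEq_of_mem (Ioo_mem_nhds hx.1 hx.2) hconst)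
  have hxpos : 0 < x := hα.trans_lt hx.1
  have hzero := (hasDerivAt_energyPrim hxpos).unique hderiv
  rwa [mul_eq_zero, or_iff_right hxpos.ne', sq_eq_zero_iff, norm_eq_zero] at hzero

lemma coeff_ab_eq_zero_of_lapKer_eq_zero {α β : ℝ} (hα : 0 ≤ α) (hαβ : α < β)
    (h : ∀ x ∈ Ioo α β, lapKer q x = 0) : q 0 = 0 ∧ q 1 = 0 := by
  have hx : (2 * α + β) / 3 ∈ Ioo α β := ⟨by linarith, by linarith⟩
  have hy : (α + 2 * β) / 3 ∈ Ioo α β := ⟨by linarith, by linarith⟩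
  have hlog : Real.log ((2 * α + β) / 3) - Real.log ((α + 2 * β) / 3) ≠ 0 :=
    (sub_neg.2 (Real.log_lt_log (hα.trans_lt hx.1) (by linarith))).ne
  have hdiff : lapKer q ((2 * α + β) / 3) - lapKer q ((α + 2 * β) / 3)
      = 4 * q 1 * ((Real.log ((2 * α + β) / 3) - Real.log ((α + 2 * β) / 3) : ℝ) : ℂ) := by
    simp only [lapKer, ofReal_sub]
    ring
  rw [h _ hx, h _ hy, sub_zero, eq_comm] at hdiff
  have h1 : q 1 = 0 := by
    rcases mul_eq_zero.1 hdiff with h4 | hl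
    · simpa using h4
    · exact absurd (ofReal_eq_zero.1 hl) hlog
  have h0 := h _ hx
  simp only [lapKer, h1] at h0
  exact ⟨by simpa using h0, h1⟩

end Energy

lemma knot_pos {n : ℕ} {r : ℕ → ℝ} (hpos : 0 < r 1) (hr : StrictMonoOn r (Icc 1 n)) {j : ℕ}
    (h₁ : 1 ≤ j) (hj : j ≤ n) : 0 < r j :=
  hpos.trans_le (hr.monotoneOn ⟨le_rfl, h₁.trans hj⟩ ⟨h₁, hj⟩ h₁)

/-- Coefficient vectors `q 0, …, q n` of a non-singular Beppo Levi spline: `q j` describes the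
spline between the knots `r j` and `r (j + 1)`, where `r 0` is read as `0` and `r (n + 1)`
as `∞`. -/
structure IsSplineCoeffs (n : ℕ) (r : ℕ → ℝ) (q : ℕ → Fin 4 → ℂ) : Prop where
  left_b : q 0 1 = 0
  left_d : q 0 3 = 0
  right_a : q n 0 = 0
  right_b : q n 1 = 0
  glue : ∀ j < n, kerJet (q j) (r (j + 1)) = kerJet (q (j + 1)) (r (j + 1))

namespace IsSplineCoeffs

variable {n : ℕ} {r : ℕ → ℝ} {p q : ℕ → Fin 4 → ℂ}

lemma sub (hp : IsSplineCoeffs n r p) (hq : IsSplineCoeffs n r q) :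
    IsSplineCoeffs n r (p - q) where
  left_b := by simp [hp.left_b, hq.left_b]
  left_d := by simp [hp.left_d, hq.left_d]
  right_a := by simp [hp.right_a, hq.right_a]
  right_b := by simp [hp.right_b, hq.right_b]
  glue j hj := by simp only [Pi.sub_apply, kerJet_sub, hp.glue j hj, hq.glue j hj]

variable (hpos : 0 < r 1) (hr : StrictMonoOn r (Icc 1 n))
include hpos hr

/-- The energy argument: by the gluing conditions the energies of the pieces telescope, and both
ends contribute nothing. -/
lemma coeff_ab_eq_zero (hq : IsSplineCoeffs n r q)
    (hval : ∀ j, 1 ≤ j → j ≤ n → kerFn (q j) (r j) = 0) :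
    ∀ j ≤ n, q j 0 = 0 ∧ q j 1 = 0 := by
  set ρ := Function.update r 0 0
  have hρ : ∀ j, j ≠ 0 → ρ j = r j := fun j hj => Function.update_of_ne hj _ _
  have hρ_nonneg : ∀ j ≤ n, 0 ≤ ρ j := by
    rintro (_ | j) hj
    · simp [ρ]
    · rw [hρ _ j.succ_ne_zero]
      exact (knot_pos hpos hr j.succ_pos' hj).le
  have hρ_lt : ∀ j < n, ρ j < ρ (j + 1) := by
    rintro (_ | j) hj
    · simpa [ρ] using hpos
    · rw [hρ _ j.succ_ne_zero, hρ _ (j + 1).succ_ne_zero]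
      exact hr ⟨j.succ_pos', hj.le⟩ ⟨by omega, hj⟩ (by omega)
  have hcont : ∀ j < n, ContinuousOn (energyPrim (q j)) (Icc (ρ j) (ρ (j + 1))) := by
    rintro (_ | j) hj
    · exact (continuous_energyPrim hq.left_b hq.left_d).continuousOn
    · intro x hx
      have hx0 : 0 < x :=
        (knot_pos hpos hr j.succ_pos' hj.le).trans_le ((hρ _ j.succ_ne_zero) ▸ hx.1)
      exact (hasDerivAt_energyPrim hx0).continuousAt.continuousWithinAt
  set e : ℕ → ℝ := fun j => energyPrim (q j) (ρ j)
  have hstep : ∀ j < n, energyPrim (q j) (ρ (j + 1)) = e (j + 1) := fun j hj => by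
    simp only [e, hρ _ j.succ_ne_zero]
    exact energyPrim_eq_of_kerJet_eq (knot_pos hpos hr j.succ_pos' hj).ne'
      ((congrArg Prod.fst (hq.glue j hj)).trans (hval _ j.succ_pos' hj)) (hq.glue j hj)
  have hinc : ∀ j ∈ Finset.range n, 0 ≤ e (j + 1) - e j := fun j hj => by
    have hj := Finset.mem_range.1 hj
    rw [sub_nonneg, ← hstep j hj]
    exact monotoneOn_energyPrim (hρ_nonneg j hj.le) (hcont j hj)
      (left_mem_Icc.2 (hρ_lt j hj).le) (right_mem_Icc.2 (hρ_lt j hj).le) (hρ_lt j hj).le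
  have hsum : ∑ j ∈ Finset.range n, (e (j + 1) - e j) = 0 := by
    rw [Finset.sum_range_sub]
    simp only [e, energyPrim_eq_zero hq.right_a hq.right_b, ρ, Function.update_self,
      energyPrim_zero hq.left_b, sub_zero]
  intro j hj
  rcases hj.lt_or_eq with hj | rfl
  · have hflat := (Finset.sum_eq_zero_iff_of_nonneg hinc).1 hsum j (Finset.mem_range.2 hj)
    rw [sub_eq_zero, ← hstep j hj] at hflat
    exact coeff_ab_eq_zero_of_lapKer_eq_zero (hρ_nonneg j hj.le) (hρ_lt j hj)
      (lapKer_eq_zero_of_energyPrim_le (hρ_nonneg j hj.le) (hcont j hj) hflat.le)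
  · exact ⟨hq.right_a, hq.right_b⟩

lemma eq_zero (hn : 1 ≤ n) (hq : IsSplineCoeffs n r q)
    (hval : ∀ j, 1 ≤ j → j ≤ n → kerFn (q j) (r j) = 0) : ∀ j ≤ n, q j = 0 := by
  have hab := hq.coeff_ab_eq_zero hpos hr hval
  have hd : ∀ j ≤ n, q j 3 = 0 := by
    intro j hj
    induction j with
    | zero => exact hq.left_d
    | succ j ih =>
      have h := congrArg (·.2.1) (hq.glue j hj)
      have hx : (r (j + 1) : ℂ) ≠ 0 := ofReal_ne_zero.2 (knot_pos hpos hr j.succ_pos' hj).ne'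
      simp only [kerJet, kerFn', (hab j (by omega)).1, (hab j (by omega)).2, (hab (j + 1) hj).1,
        (hab (j + 1) hj).2, ih (by omega)] at h
      simpa [hx] using h.symm
  have hker : ∀ j ≤ n, ∀ x, kerFn (q j) x = q j 2 := fun j hj x => by
    simp [kerFn, (hab j hj).1, (hab j hj).2, hd j hj]
  have hc : ∀ j ≤ n, q j 2 = 0 := by
    rintro (_ | j) hj
    · have h : kerFn (q 0) (r 1) = kerFn (q 1) (r 1) := congrArg Prod.fst (hq.glue 0 hn)
      rw [← hker 0 hj (r 1), h, hval 1 le_rfl hn]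
    · rw [← hker _ hj (r (j + 1)), hval _ j.succ_pos' hj]
  intro j hj
  ext m
  fin_cases m
  exacts [(hab j hj).1, (hab j hj).2, hc j hj, hd j hj]

lemma eq_of_kerFn_knot_eq (hn : 1 ≤ n) (hp : IsSplineCoeffs n r p) (hq : IsSplineCoeffs n r q)
    (hval : ∀ j, 1 ≤ j → j ≤ n → kerFn (p j) (r j) = kerFn (q j) (r j)) : ∀ j ≤ n, p j = q j :=
  fun j hj => sub_eq_zero.1 <| (hp.sub hq).eq_zero hpos hr hn
    (fun j h₁ hj => by rw [Pi.sub_apply, kerFn_sub, hval j h₁ hj, sub_self]) j hj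

end IsSplineCoeffs

lemma findGreatest_congr {P Q : ℕ → Prop} [DecidablePred P] [DecidablePred Q] {n : ℕ}
    (h : ∀ k ≤ n, (P k ↔ Q k)) : Nat.findGreatest P n = Nat.findGreatest Q n := by
  induction n with
  | zero => rfl
  | succ n ih =>
    rw [Nat.findGreatest_succ, Nat.findGreatest_succ, ih fun k hk => h k (by omega)]
    simp only [h (n + 1) le_rfl]

lemma hasDerivAt_of_nhdsLT_nhdsGE {f g h : ℝ → ℂ} {x : ℝ} {v : ℂ} (hg : HasDerivAt g v x)
    (hh : HasDerivAt h v x) (hfg : f =ᶠ[𝓝[<] x] g) (hfh : f =ᶠ[𝓝[≥] x] h) (hgh : g x = h x) :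
    HasDerivAt f v x := by
  have hfx : f x = h x := hfh.eq_of_nhdsWithin self_mem_Ici
  have := (hg.hasDerivWithinAt.congr_of_eventuallyEq hfg (hfx.trans hgh.symm)).union
    (hh.hasDerivWithinAt.congr_of_eventuallyEq hfh hfx)
  rwa [Iio_union_Ici, hasDerivWithinAt_univ] at this

lemma continuousAt_of_nhdsLT_nhdsGE {f g h : ℝ → ℂ} {x : ℝ} (hg : ContinuousAt g x)
    (hh : ContinuousAt h x) (hfg : f =ᶠ[𝓝[<] x] g) (hfh : f =ᶠ[𝓝[≥] x] h) (hgh : g x = h x) :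
    ContinuousAt f x := by
  have hfx : f x = h x := hfh.eq_of_nhdsWithin self_mem_Ici
  have := (hg.continuousWithinAt.congr_of_eventuallyEq hfg (hfx.trans hgh.symm)).union
    (hh.continuousWithinAt.congr_of_eventuallyEq hfh hfx)
  rwa [Iio_union_Ici, continuousWithinAt_univ] at this

lemma contDiffOn_two_of_hasDerivAt {f f' f'' : ℝ → ℂ} {s : Set ℝ} (hs : IsOpen s)
    (h₁ : ∀ x ∈ s, HasDerivAt f (f' x) x) (h₂ : ∀ x ∈ s, HasDerivAt f' (f'' x) x)
    (h₃ : ContinuousOn f'' s) : ContDiffOn ℝ 2 f s := by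
  have hf' : ContDiffOn ℝ 1 f' s := by
    rw [show (1 : WithTop ℕ∞) = 0 + 1 from rfl, contDiffOn_succ_iff_deriv_of_isOpen hs]
    refine ⟨fun x hx => (h₂ x hx).differentiableAt.differentiableWithinAt, by simp, ?_⟩
    exact contDiffOn_zero.2 (h₃.congr fun x hx => (h₂ x hx).deriv)
  rw [show (2 : WithTop ℕ∞) = 1 + 1 from rfl, contDiffOn_succ_iff_deriv_of_isOpen hs]
  exact ⟨fun x hx => (h₁ x hx).differentiableAt.differentiableWithinAt, by simp,
    hf'.congr fun x hx => (h₁ x hx).deriv⟩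

def pieceIdx (n : ℕ) (r : ℕ → ℝ) (x : ℝ) : ℕ := Nat.findGreatest (fun j => r j ≤ x) n

def pieceIdxLeft (n : ℕ) (r : ℕ → ℝ) (x : ℝ) : ℕ := Nat.findGreatest (fun j => r j < x) n

def pieceFn (n : ℕ) (r : ℕ → ℝ) (Q : ℕ → ℝ → ℂ) (x : ℝ) : ℂ := Q (pieceIdx n r x) x

section Pieces

variable {n : ℕ} {r : ℕ → ℝ} {x : ℝ}

lemma eventually_pieceIdx_nhdsGE (x : ℝ) : ∀ᶠ y in 𝓝[≥] x, pieceIdx n r y = pieceIdx n r x := by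
  have : ∀ᶠ y in 𝓝[≥] x, ∀ k ∈ Finset.range (n + 1), (r k ≤ y ↔ r k ≤ x) := by
    refine (eventually_all_finset _).2 fun k _ => ?_
    rcases le_or_gt (r k) x with hk | hk
    · filter_upwards [self_mem_nhdsWithin] with y (hy : x ≤ y)
      exact iff_of_true (hk.trans hy) hk
    · filter_upwards [nhdsWithin_le_nhds (Iio_mem_nhds hk)] with y (hy : y < r k)
      exact iff_of_false (not_le.2 hy) (not_le.2 hk)
  filter_upwards [this] with y hy
  exact findGreatest_congr fun k hk => hy k (Finset.mem_range_succ_iff.2 hk)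

lemma eventually_pieceIdx_nhdsLT (x : ℝ) :
    ∀ᶠ y in 𝓝[<] x, pieceIdx n r y = pieceIdxLeft n r x := by
  have : ∀ᶠ y in 𝓝[<] x, ∀ k ∈ Finset.range (n + 1), (r k ≤ y ↔ r k < x) := by
    refine (eventually_all_finset _).2 fun k _ => ?_
    rcases lt_or_ge (r k) x with hk | hk
    · filter_upwards [nhdsWithin_le_nhds (Ioi_mem_nhds hk)] with y (hy : r k < y)
      exact iff_of_true hy.le hk
    · filter_upwards [self_mem_nhdsWithin] with y (hy : y < x)
      exact iff_of_false (not_le.2 (hy.trans_le hk)) (not_lt.2 hk)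
  filter_upwards [this] with y hy
  exact findGreatest_congr fun k hk => hy k (Finset.mem_range_succ_iff.2 hk)

lemma pieceIdx_le (x : ℝ) : pieceIdx n r x ≤ n := Nat.findGreatest_le n

lemma pieceIdxLeft_eq_pieceIdx (hx : ∀ j ∈ Icc 1 n, r j ≠ x) :
    pieceIdxLeft n r x = pieceIdx n r x := by
  obtain ⟨hle, hmem, hmax⟩ := Nat.findGreatest_eq_iff.1 (rfl : pieceIdx n r x = _)
  refine Nat.findGreatest_eq_iff.2 ⟨hle, fun h0 => (hmem h0).lt_of_ne ?_,
    fun k hk hkn hlt => hmax hk hkn hlt.le⟩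
  exact hx _ ⟨Nat.one_le_iff_ne_zero.2 h0, hle⟩

lemma pieceFn_eventuallyEq_nhdsGE (Q : ℕ → ℝ → ℂ) (x : ℝ) :
    pieceFn n r Q =ᶠ[𝓝[≥] x] Q (pieceIdx n r x) := by
  filter_upwards [eventually_pieceIdx_nhdsGE x] with y hy
  rw [pieceFn, hy]

lemma pieceFn_eventuallyEq_nhdsLT (Q : ℕ → ℝ → ℂ) (x : ℝ) :
    pieceFn n r Q =ᶠ[𝓝[<] x] Q (pieceIdxLeft n r x) := by
  filter_upwards [eventually_pieceIdx_nhdsLT x] with y hy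
  rw [pieceFn, hy]

lemma hasDerivAt_pieceFn {Q Q' : ℕ → ℝ → ℂ} (hQ : ∀ j, HasDerivAt (Q j) (Q' j x) x)
    (hglue : Q (pieceIdxLeft n r x) x = Q (pieceIdx n r x) x)
    (hglue' : Q' (pieceIdxLeft n r x) x = Q' (pieceIdx n r x) x) :
    HasDerivAt (pieceFn n r Q) (pieceFn n r Q' x) x :=
  hasDerivAt_of_nhdsLT_nhdsGE ((hQ _).congr_deriv hglue') (hQ _)
    (pieceFn_eventuallyEq_nhdsLT Q x) (pieceFn_eventuallyEq_nhdsGE Q x) hglue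

lemma continuousAt_pieceFn {Q : ℕ → ℝ → ℂ} (hQ : ∀ j, ContinuousAt (Q j) x)
    (hglue : Q (pieceIdxLeft n r x) x = Q (pieceIdx n r x) x) :
    ContinuousAt (pieceFn n r Q) x :=
  continuousAt_of_nhdsLT_nhdsGE (hQ _) (hQ _) (pieceFn_eventuallyEq_nhdsLT Q x)
    (pieceFn_eventuallyEq_nhdsGE Q x) hglue

variable (hr : StrictMonoOn r (Icc 1 n))
include hr

lemma pieceIdx_eq {j : ℕ} (hj : j ≤ n) (h₁ : j ≠ 0 → r j ≤ x) (h₂ : j < n → x < r (j + 1)) :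
    pieceIdx n r x = j := by
  refine Nat.findGreatest_eq_iff.2 ⟨hj, h₁, fun k hjk hkn hk => ?_⟩
  have := hr.monotoneOn ⟨by omega, by omega⟩ ⟨by omega, hkn⟩ (Nat.succ_le_of_lt hjk)
  linarith [h₂ (by omega)]

lemma pieceIdxLeft_eq {j : ℕ} (hj : j ≤ n) (h₁ : j ≠ 0 → r j < x)
    (h₂ : j < n → x ≤ r (j + 1)) : pieceIdxLeft n r x = j := by
  refine Nat.findGreatest_eq_iff.2 ⟨hj, h₁, fun k hjk hkn hk => ?_⟩
  have := hr.monotoneOn ⟨by omega, by omega⟩ ⟨by omega, hkn⟩ (Nat.succ_le_of_lt hjk)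
  linarith [h₂ (by omega)]

lemma pieceIdx_knot {j : ℕ} (h₁ : 1 ≤ j) (hj : j ≤ n) : pieceIdx n r (r j) = j :=
  pieceIdx_eq hr hj (fun _ => le_rfl) fun hjn => hr ⟨h₁, hj⟩ ⟨by omega, hjn⟩ (by omega)

lemma pieceIdxLeft_eq_or (x : ℝ) :
    pieceIdxLeft n r x = pieceIdx n r x ∨ ∃ j < n, x = r (j + 1) ∧
      pieceIdxLeft n r x = j ∧ pieceIdx n r x = j + 1 := by
  by_cases hx : ∃ j ∈ Icc 1 n, r j = x
  · obtain ⟨j, ⟨hj₁, hjn⟩, rfl⟩ := hx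
    obtain ⟨j, rfl⟩ := Nat.exists_eq_add_of_le' hj₁
    refine Or.inr ⟨j, hjn, rfl, pieceIdxLeft_eq hr (by omega) (fun hj0 => ?_) (fun _ => le_rfl),
      pieceIdx_knot hr hj₁ hjn⟩
    exact hr ⟨by omega, by omega⟩ ⟨hj₁, hjn⟩ (by omega)
  · push Not at hx
    exact Or.inl (pieceIdxLeft_eq_pieceIdx hx)

end Pieces

def splineFn (n : ℕ) (r : ℕ → ℝ) (q : ℕ → Fin 4 → ℂ) : ℝ → ℂ := pieceFn n r fun j => kerFn (q j)

section Spline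

variable {n : ℕ} {r : ℕ → ℝ} {p q : ℕ → Fin 4 → ℂ}

lemma splineFn_congr (h : ∀ j ≤ n, p j = q j) : splineFn n r p = splineFn n r q := by
  funext x
  simp only [splineFn, pieceFn, h _ (pieceIdx_le x)]

lemma splineFn_knot (hr : StrictMonoOn r (Icc 1 n)) {j : ℕ} (h₁ : 1 ≤ j) (hj : j ≤ n) :
    splineFn n r q (r j) = kerFn (q j) (r j) := by
  rw [splineFn, pieceFn, pieceIdx_knot hr h₁ hj]

namespace IsSplineCoeffs

variable (hr : StrictMonoOn r (Icc 1 n))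
include hr

lemma kerJet_pieceIdxLeft (hq : IsSplineCoeffs n r q) (x : ℝ) :
    kerJet (q (pieceIdxLeft n r x)) x = kerJet (q (pieceIdx n r x)) x := by
  rcases pieceIdxLeft_eq_or hr x with h | ⟨j, hj, rfl, hl, hi⟩
  · rw [h]
  · rw [hl, hi]
    exact hq.glue j hj

lemma contDiffOn (hq : IsSplineCoeffs n r q) : ContDiffOn ℝ 2 (splineFn n r q) (Ioi 0) := by
  have hjet := hq.kerJet_pieceIdxLeft hr
  refine contDiffOn_two_of_hasDerivAt (f' := pieceFn n r fun j => kerFn' (q j))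
    (f'' := pieceFn n r fun j => kerFn'' (q j)) isOpen_Ioi (fun x hx => ?_) (fun x hx => ?_)
    (fun x hx => ?_)
  · exact hasDerivAt_pieceFn (fun j => hasDerivAt_kerFn (q j) (ne_of_gt hx))
      (congrArg (·.1) (hjet x)) (congrArg (·.2.1) (hjet x))
  · exact hasDerivAt_pieceFn (fun j => hasDerivAt_kerFn' (q j) (ne_of_gt hx))
      (congrArg (·.2.1) (hjet x)) (congrArg (·.2.2) (hjet x))
  · exact (continuousAt_pieceFn (fun j => continuousAt_kerFn'' (q j) (ne_of_gt hx))
      (congrArg (·.2.2) (hjet x))).continuousWithinAt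

lemma nonSingularBLS (hq : IsSplineCoeffs n r q) : NonSingularBLS (r 1) (splineFn n r q) := by
  refine ⟨q 0 0, q 0 2, fun x hx => ?_⟩
  rw [splineFn, pieceFn, pieceIdx_eq hr n.zero_le (absurd rfl) (fun _ => hx.2),
    kerFn_of_b_d_eq_zero _ hq.left_b hq.left_d]

lemma isBLSpline (hpos : 0 < r 1) (hq : IsSplineCoeffs n r q) :
    IsBLSpline n r (splineFn n r q) where
  pieces j h₁ hj := ⟨q j 0, q j 1, q j 2, q j 3, fun x hx => by
    rw [splineFn, pieceFn, pieceIdx_eq hr (by omega) (fun _ => hx.1.le) (fun _ => hx.2)]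
    rfl⟩
  left := by
    obtain ⟨a, c, h⟩ := hq.nonSingularBLS hr
    exact ⟨a, 0, c, fun x hx => by simp [h x hx]⟩
  right := ⟨q n 2, q n 3, fun x hx => by
    rw [splineFn, pieceFn, pieceIdx_eq hr le_rfl (fun _ => hx.le) (absurd · (lt_irrefl n))]
    simp [kerFn, hq.right_a, hq.right_b]⟩
  smooth := hq.contDiffOn hr
  cont0 := by
    have h0 : pieceIdx n r 0 = 0 := pieceIdx_eq hr n.zero_le (absurd rfl) (fun _ => hpos)
    have hc : Continuous (kerFn (q 0)) := by
      rw [funext (kerFn_of_b_d_eq_zero _ hq.left_b hq.left_d)]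
      fun_prop
    exact hc.continuousWithinAt.congr_of_eventuallyEq
      (h0 ▸ pieceFn_eventuallyEq_nhdsGE _ 0) (by rw [splineFn, pieceFn, h0])

end IsSplineCoeffs

end Spline

lemma _root_.IsBLSpline.continuousOn_Ici {n : ℕ} {r : ℕ → ℝ} {η : ℝ → ℂ} (hη : IsBLSpline n r η) :
    ContinuousOn η (Ici 0) := by
  intro x hx
  rcases (mem_Ici.1 hx).eq_or_lt with rfl | hx
  · exact hη.cont0
  · exact (hη.smooth.continuousOn.continuousAt (Ioi_mem_nhds hx)).continuousWithinAt

lemma kerJet_eq_of_eqOn {τ : ℝ → ℂ} {q : Fin 4 → ℂ} (hτ : ContDiffOn ℝ 2 τ (Ioi 0)) {s : Set ℝ}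
    (hs : IsOpen s) (hs₀ : s ⊆ Ioi 0) (h : EqOn τ (kerFn q) s) {x : ℝ} (hx : 0 < x)
    (hxs : x ∈ closure s) : (τ x, deriv τ x, deriv (deriv τ) x) = kerJet q x := by
  have hsub : insert x s ⊆ Ioi 0 := insert_subset hx hs₀
  have key {f g : ℝ → ℂ} (hf : ContinuousOn f (Ioi 0)) (hg : ∀ y > 0, ContinuousAt g y)
      (hfg : EqOn f g s) : f x = g x :=
    hfg.of_subset_closure (hf.mono hsub) (fun y hy => (hg y (hsub hy)).continuousWithinAt)
      (subset_insert x s) (insert_subset hxs subset_closure) (mem_insert x s)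
  have h' : EqOn (deriv τ) (kerFn' q) s := fun y hy =>
    (h.deriv hs hy).trans (hasDerivAt_kerFn q (hs₀ hy).ne').deriv
  have h'' : EqOn (deriv (deriv τ)) (kerFn'' q) s := fun y hy =>
    (h'.deriv hs hy).trans (hasDerivAt_kerFn' q (hs₀ hy).ne').deriv
  rw [kerJet, key hτ.continuousOn (fun y hy => (hasDerivAt_kerFn q hy.ne').continuousAt) h,
    key (hτ.continuousOn_deriv_of_isOpen isOpen_Ioi (by norm_num))
      (fun y hy => (hasDerivAt_kerFn' q hy.ne').continuousAt) h',
    key ((hτ.deriv_of_isOpen isOpen_Ioi (m := 1) (by norm_num)).continuousOn_deriv_of_isOpen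
      isOpen_Ioi le_rfl) (fun y hy => continuousAt_kerFn'' q hy.ne') h'']

def piece (n : ℕ) (r : ℕ → ℝ) (j : ℕ) : Set ℝ :=
  if j = 0 then Ioo 0 (r 1) else if j < n then Ioo (r j) (r (j + 1)) else Ioi (r n)

section Piece

variable {n : ℕ} {r : ℕ → ℝ}

lemma isOpen_piece (j : ℕ) : IsOpen (piece n r j) := by
  unfold piece
  split_ifs
  exacts [isOpen_Ioo, isOpen_Ioo, isOpen_Ioi]

variable (hpos : 0 < r 1) (hr : StrictMonoOn r (Icc 1 n)) (hn : 1 ≤ n)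
include hpos hr hn

lemma piece_subset_Ioi (j : ℕ) : piece n r j ⊆ Ioi 0 := by
  unfold piece
  split_ifs with h0 hj
  · exact Ioo_subset_Ioi_self
  · exact Ioo_subset_Ioi_self.trans (Ioi_subset_Ioi (knot_pos hpos hr (by omega) hj.le).le)
  · exact Ioi_subset_Ioi (knot_pos hpos hr hn le_rfl).le

lemma mem_closure_piece {x : ℝ} {j : ℕ} (hj : j ≤ n) (hx : 0 ≤ x) (h₁ : j ≠ 0 → r j ≤ x)
    (h₂ : j < n → x ≤ r (j + 1)) : x ∈ closure (piece n r j) := by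
  unfold piece
  split_ifs with h0 hjn
  · subst h0
    rw [closure_Ioo hpos.ne]
    exact ⟨hx, h₂ (by omega)⟩
  · rw [closure_Ioo (hr ⟨by omega, hjn.le⟩ ⟨by omega, hjn⟩ (by omega)).ne]
    exact ⟨h₁ h0, h₂ hjn⟩
  · rw [closure_Ioi, show n = j by omega]
    exact h₁ h0

lemma mem_closure_piece_pieceIdx {x : ℝ} (hx : 0 < x) :
    x ∈ closure (piece n r (pieceIdx n r x)) := by
  obtain ⟨hle, hmem, hmax⟩ := Nat.findGreatest_eq_iff.1 (rfl : pieceIdx n r x = _)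
  exact mem_closure_piece hpos hr hn hle hx.le hmem fun h => (not_le.1 (hmax (by omega) h)).le

end Piece

lemma _root_.IsBLSpline.exists_isSplineCoeffs_s4 {n : ℕ} {r : ℕ → ℝ} {τ : ℝ → ℂ} (hpos : 0 < r 1)
    (hr : StrictMonoOn r (Icc 1 n)) (hn : 1 ≤ n) (hτ : IsBLSpline n r τ)
    (hns : NonSingularBLS (r 1) τ) :
    ∃ q, IsSplineCoeffs n r q ∧ EqOn τ (splineFn n r q) (Ioi 0) := by
  have hloc : ∀ j, ∃ c : Fin 4 → ℂ, (j = 0 → c 1 = 0 ∧ c 3 = 0) ∧ (j = n → c 0 = 0 ∧ c 1 = 0) ∧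
      EqOn τ (kerFn c) (piece n r j) := by
    intro j
    by_cases hj0 : j = 0
    · obtain ⟨a, c, h⟩ := hns
      refine ⟨![a, 0, c, 0], fun _ => ⟨rfl, rfl⟩, fun _ => by omega, fun x hx => ?_⟩
      rw [piece, if_pos hj0] at hx
      simp [h x hx, kerFn]
    by_cases hjn : j < n
    · obtain ⟨a, b, c, d, h⟩ := hτ.pieces j (by omega) hjn
      refine ⟨![a, b, c, d], by omega, by omega, fun x hx => ?_⟩
      rw [piece, if_neg hj0, if_pos hjn] at hx
      simp [h x hx, kerFn]
    · obtain ⟨c, d, h⟩ := hτ.right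
      refine ⟨![0, 0, c, d], by omega, fun _ => ⟨rfl, rfl⟩, fun x hx => ?_⟩
      rw [piece, if_neg hj0, if_neg hjn] at hx
      simp [h x hx, kerFn]
  choose q hq₀ hqₙ hqτ using hloc
  have hjet j {x} (hx : 0 < x) := kerJet_eq_of_eqOn hτ.smooth (isOpen_piece j)
    (piece_subset_Ioi hpos hr hn j) (hqτ j) hx
  refine ⟨q, ⟨(hq₀ 0 rfl).1, (hq₀ 0 rfl).2, (hqₙ n rfl).1, (hqₙ n rfl).2, fun j hj => ?_⟩,
    fun x hx => congrArg Prod.fst (hjet _ hx (mem_closure_piece_pieceIdx hpos hr hn hx))⟩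
  have hx := knot_pos hpos hr j.succ_pos' hj
  -- the jet of the `C²` function `τ` at a knot is that of both adjacent pieces
  refine (hjet j hx (mem_closure_piece hpos hr hn hj.le hx.le (fun _ => ?_) fun _ => le_rfl)).symm
    |>.trans (hjet (j + 1) hx (mem_closure_piece hpos hr hn hj hx.le (fun _ => le_rfl) fun h => ?_))
  · exact hr.monotoneOn ⟨by omega, hj.le⟩ ⟨by omega, hj⟩ (by omega)
  · exact hr.monotoneOn ⟨by omega, hj⟩ ⟨by omega, h⟩ (by omega)

def toSeq {n : ℕ} (v : Fin (n + 1) → Fin 4 → ℂ) (j : ℕ) : Fin 4 → ℂ :=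
  if h : j < n + 1 then v ⟨j, h⟩ else 0

/-- The end and gluing defects of the spline with coefficients `v`, and its values at the knots. -/
def constraintMap (n : ℕ) (r : ℕ → ℝ) :
    (Fin (n + 1) → Fin 4 → ℂ) →ₗ[ℂ] (Fin 4 → ℂ) × (Fin n → ℂ × ℂ × ℂ) × (Fin n → ℂ) where
  toFun v := (![v 0 1, v 0 3, v (Fin.last n) 0, v (Fin.last n) 1],
    fun j => kerJet (v j.castSucc) (r (j + 1)) - kerJet (v j.succ) (r (j + 1)),
    fun j => kerFn (v j.succ) (r (j + 1)))
  map_add' v w := by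
    refine Prod.ext ?_ (Prod.ext ?_ ?_)
    · ext m; fin_cases m <;> simp
    · ext j <;> simp [kerJet, kerFn, kerFn', kerFn''] <;> ring
    · ext j; simp [kerFn]; ring
  map_smul' c v := by
    refine Prod.ext ?_ (Prod.ext ?_ ?_)
    · ext m; fin_cases m <;> simp
    · ext j <;> simp [kerJet, kerFn, kerFn', kerFn''] <;> ring
    · ext j; simp [kerFn]; ring

section Existence

variable {n : ℕ} {r : ℕ → ℝ}

lemma isSplineCoeffs_of_constraintMap_eq {v : Fin (n + 1) → Fin 4 → ℂ} {t : ℕ → ℂ}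
    (h : constraintMap n r v = (0, 0, fun j : Fin n => t (j + 1))) :
    IsSplineCoeffs n r (toSeq v) ∧ ∀ j, 1 ≤ j → j ≤ n → kerFn (toSeq v j) (r j) = t j := by
  have hv : ∀ j (hj : j < n + 1), toSeq v j = v ⟨j, hj⟩ := fun j hj => dif_pos hj
  have hend := congrArg Prod.fst h
  have hglue := congrArg (·.2.1) h
  have hval := congrArg (·.2.2) h
  simp only [constraintMap, LinearMap.coe_mk, AddHom.coe_mk] at hend hglue hval
  refine ⟨⟨?_, ?_, ?_, ?_, fun j hj => ?_⟩, fun j h₁ hj => ?_⟩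
  · simpa [hv 0 n.succ_pos] using congrFun hend 0
  · simpa [hv 0 n.succ_pos] using congrFun hend 1
  · simpa [hv n n.lt_succ_self, Fin.last] using congrFun hend 2
  · simpa [hv n n.lt_succ_self, Fin.last] using congrFun hend 3
  · rw [hv j (by omega), hv (j + 1) (by omega)]
    exact sub_eq_zero.1 (congrFun hglue ⟨j, hj⟩)
  · obtain ⟨j, rfl⟩ := Nat.exists_eq_add_of_le' h₁
    rw [hv _ (by omega)]
    exact congrFun hval ⟨j, hj⟩

lemma exists_isSplineCoeffs_s4 (hpos : 0 < r 1) (hr : StrictMonoOn r (Icc 1 n)) (hn : 1 ≤ n)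
    (t : ℕ → ℂ) : ∃ q, IsSplineCoeffs n r q ∧ ∀ j, 1 ≤ j → j ≤ n → kerFn (q j) (r j) = t j := by
  have hinj : Function.Injective (constraintMap n r) := by
    rw [← LinearMap.ker_eq_bot, Submodule.eq_bot_iff]
    intro v hv
    obtain ⟨hq, hval⟩ := isSplineCoeffs_of_constraintMap_eq (t := 0) hv
    have h0 := hq.eq_zero hpos hr hn hval
    ext i m
    simpa [toSeq, i.2] using congrFun (h0 i (Nat.lt_succ_iff.1 i.2)) m
  have hdim : Module.finrank ℂ (Fin (n + 1) → Fin 4 → ℂ) =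
      Module.finrank ℂ ((Fin 4 → ℂ) × (Fin n → ℂ × ℂ × ℂ) × (Fin n → ℂ)) := by
    simp [Module.finrank_prod, Module.finrank_pi_fintype]
    ring
  obtain ⟨v, hv⟩ := (LinearMap.injective_iff_surjective_of_finrank_eq_finrank hdim).1 hinj
    (0, 0, fun j : Fin n => t (j + 1))
  exact ⟨toSeq v, isSplineCoeffs_of_constraintMap_eq hv⟩

end Existence

end BeppoLevi

open BeppoLevi

/-- existence and uniqueness of the non-singular Beppo Levi `L₀`-spline `σ^B`
interpolating `ν j` at the knots. -/
theorem stmt4 (n : ℕ) (r : ℕ → ℝ) (hn : 1 ≤ n) (hpos : 0 < r 1)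
    (hmono : ∀ j, 1 ≤ j → j < n → r j < r (j + 1))
    (ν : ℕ → ℝ) :
    ∃ σ : ℝ → ℂ,
      (IsBLSpline n r σ ∧ NonSingularBLS (r 1) σ ∧
        (∀ j, 1 ≤ j → j ≤ n → σ (r j) = (ν j : ℂ))) ∧
      ∀ τ : ℝ → ℂ,
        (IsBLSpline n r τ ∧ NonSingularBLS (r 1) τ ∧
          (∀ j, 1 ≤ j → j ≤ n → τ (r j) = (ν j : ℂ))) →
        Set.EqOn τ σ (Set.Ici 0) := by
  have hr : StrictMonoOn r (Icc 1 n) :=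
    strictMonoOn_of_lt_add_one ordConnected_Icc fun j _ hj hj' => hmono j hj.1 hj'.2
  obtain ⟨q, hq, hqν⟩ := exists_isSplineCoeffs_s4 hpos hr hn fun j => (ν j : ℂ)
  refine ⟨splineFn n r q, ⟨hq.isBLSpline hr hpos, hq.nonSingularBLS hr,
    fun j h₁ hj => (splineFn_knot hr h₁ hj).trans (hqν j h₁ hj)⟩, ?_⟩
  rintro τ ⟨hτ, hτns, hτν⟩
  obtain ⟨p, hp, hτp⟩ := hτ.exists_isSplineCoeffs_s4 hpos hr hn hτns
  have hpq := hp.eq_of_kerFn_knot_eq hpos hr hn hq fun j h₁ hj =>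
    (splineFn_knot hr h₁ hj).symm.trans <| (hτp (knot_pos hpos hr h₁ hj)).symm.trans <|
      (hτν j h₁ hj).trans (hqν j h₁ hj).symm
  rw [← splineFn_congr hpq]
  exact hτp.of_subset_closure hτ.continuousOn_Ici (hp.isBLSpline hr hpos).continuousOn_Ici
    Ioi_subset_Ici_self (by rw [closure_Ioi])
end
end

section
/- Let n ≥ 2, let 0 < r₁ < … < r_n, and let ν₁, …, ν_n be real values. Let λ̂₂, …, λ̂_n be the unique solution of the linear system Σ_{j=2}^n λ_j·H_{0,∞}(r_k, r_j) = ν_k − ν₁ for k = 2, …, n. Then the function s_{0,∞}(r) := ν₁ + Σ_{j=2}^n λ̂_j·H_{0,∞}(r, r_j) coincides on (0,∞) with σ^B, the unique non-singular Beppo Levi L₀-spline on ρ = {r₁,…,r_n} satisfying σ^B(r_j) = ν_j for all j ∈ {1,…,n}. (Consequently σ^B is the pointwise limit, as R₁ → 0 and R₂ → ∞, of Rabut's minimizer on [R₁,R₂] interpolating the same data.) -/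
open MeasureTheory Set Filter

noncomputable section

/-!
Both `σ` and `s = ν₁ + ∑ λⱼ H(·, rⱼ)` are, on each piece between consecutive knots, elements
`a x² + b x² log x + c + d log x` of `Ker L₀`, glued in `C²` at the knots: for `s` because
`K(·, t)` vanishes to second order at `t`, and the normalisation of `H` makes `s` of the form
`a x² + c` before `r₁` and `c + d log x` after `rₙ`. Hence `q = σ - s` is such a spline that
vanishes at every knot.

For a kernel element the flux `F = Re (x q'' q̄') - 4 Re (b q̄)` has
`F' = x |q''|² + |q'|² / x ≥ 0`. Since `q` vanishes at the knots, `F` is continuous across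
them; it equals `4 |a|² x² ≥ 0` on the first piece and `-|d|² / x² ≤ 0` on the last. So `F`
vanishes identically, which forces `a = 0` on the first piece, `d = 0` on the last and `q' = 0`
on the others; as `q` vanishes at the knots, `q = 0`.
-/

open Topology ComplexConjugate

/-- `kerVal x p` is the value at `x` of `p 0 x² + p 1 x² log x + p 2 + p 3 log x ∈ Ker L₀`;
`kerDeriv`, `kerDeriv2`, `kerDeriv3` are its first three derivatives. -/
def kerVal (x : ℝ) : (Fin 4 → ℂ) →ₗ[ℂ] ℂ :=
  Fintype.linearCombination ℂ ![(x : ℂ) ^ 2, (x : ℂ) ^ 2 * Real.log x, 1, Real.log x]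

def kerDeriv (x : ℝ) : (Fin 4 → ℂ) →ₗ[ℂ] ℂ :=
  Fintype.linearCombination ℂ ![2 * x, 2 * x * Real.log x + x, 0, (x : ℂ)⁻¹]

def kerDeriv2 (x : ℝ) : (Fin 4 → ℂ) →ₗ[ℂ] ℂ :=
  Fintype.linearCombination ℂ ![2, 2 * Real.log x + 3, 0, -((x : ℂ) ^ 2)⁻¹]

def kerDeriv3 (x : ℝ) : (Fin 4 → ℂ) →ₗ[ℂ] ℂ :=
  Fintype.linearCombination ℂ ![0, 2 * (x : ℂ)⁻¹, 0, 2 * ((x : ℂ) ^ 3)⁻¹]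

section Kernel

variable (p : Fin 4 → ℂ) {x : ℝ}

lemma kerVal_apply (x : ℝ) :
    kerVal x p = p 0 * x ^ 2 + p 1 * (x ^ 2 * Real.log x) + p 2 + p 3 * Real.log x := by
  simp [kerVal, Fintype.linearCombination_apply, Fin.sum_univ_four]

lemma kerDeriv_apply (x : ℝ) :
    kerDeriv x p = p 0 * (2 * x) + p 1 * (2 * x * Real.log x + x) + p 3 * (x : ℂ)⁻¹ := by
  simp [kerDeriv, Fintype.linearCombination_apply, Fin.sum_univ_four]

lemma kerDeriv2_apply (x : ℝ) :
    kerDeriv2 x p = p 0 * 2 + p 1 * (2 * Real.log x + 3) + p 3 * -((x : ℂ) ^ 2)⁻¹ := by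
  simp [kerDeriv2, Fintype.linearCombination_apply, Fin.sum_univ_four]

lemma kerDeriv3_apply (x : ℝ) :
    kerDeriv3 x p = p 1 * (2 * (x : ℂ)⁻¹) + p 3 * (2 * ((x : ℂ) ^ 3)⁻¹) := by
  simp [kerDeriv3, Fintype.linearCombination_apply, Fin.sum_univ_four]

lemma hasDerivAt_ofReal (x : ℝ) : HasDerivAt (fun y : ℝ => (y : ℂ)) 1 x := by
  simpa using (hasDerivAt_id x).ofReal_comp

lemma hasDerivAt_ofReal_pow (k : ℕ) (x : ℝ) :
    HasDerivAt (fun y : ℝ => (y : ℂ) ^ k) (k * (x : ℂ) ^ (k - 1)) x :=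
  (hasDerivAt_pow k (x : ℂ)).comp_ofReal

lemma hasDerivAt_ofReal_log (hx : 0 < x) :
    HasDerivAt (fun y : ℝ => (Real.log y : ℂ)) (x : ℂ)⁻¹ x := by
  simpa using (Real.hasDerivAt_log hx.ne').ofReal_comp

lemma hasDerivAt_kerVal (hx : 0 < x) : HasDerivAt (fun y => kerVal y p) (kerDeriv x p) x := by
  have hx0 : (x : ℂ) ≠ 0 := by exact_mod_cast hx.ne'
  simp only [kerVal_apply, kerDeriv_apply]
  have h2 := hasDerivAt_ofReal_pow 2 x
  have hl := hasDerivAt_ofReal_log hx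
  refine ((((h2.const_mul (p 0)).fun_add ((h2.fun_mul hl).const_mul (p 1))).add_const
    (p 2)).fun_add (hl.const_mul (p 3))).congr_deriv ?_
  field_simp
  ring

lemma hasDerivAt_kerDeriv (hx : 0 < x) :
    HasDerivAt (fun y => kerDeriv y p) (kerDeriv2 x p) x := by
  have hx0 : (x : ℂ) ≠ 0 := by exact_mod_cast hx.ne'
  simp only [kerDeriv_apply, kerDeriv2_apply]
  have h1 := hasDerivAt_ofReal x
  have hl := hasDerivAt_ofReal_log hx
  refine ((((h1.const_mul 2).const_mul (p 0)).fun_add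
    ((((h1.const_mul 2).fun_mul hl).fun_add h1).const_mul (p 1))).fun_add
    ((h1.fun_inv hx0).const_mul (p 3))).congr_deriv ?_
  field_simp
  ring

lemma hasDerivAt_kerDeriv2 (hx : 0 < x) :
    HasDerivAt (fun y => kerDeriv2 y p) (kerDeriv3 x p) x := by
  have hx0 : (x : ℂ) ≠ 0 := by exact_mod_cast hx.ne'
  simp only [kerDeriv2_apply, kerDeriv3_apply]
  have hl := hasDerivAt_ofReal_log hx
  have hi := (hasDerivAt_ofReal_pow 2 x).fun_inv (pow_ne_zero 2 hx0)
  refine ((hasDerivAt_const x (p 0 * 2)).fun_add (((hl.const_mul 2).add_const 3).const_mul (p 1))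
    |>.fun_add (hi.fun_neg.const_mul (p 3))).congr_deriv ?_
  field_simp
  ring

end Kernel

section Vanishing

variable {p : Fin 4 → ℂ} {x : ℝ}

lemma eq_zero_of_kerVal_eq_zero (ha : p 0 = 0) (hb : p 1 = 0) (hd : p 3 = 0)
    (h : kerVal x p = 0) : p = 0 := by
  have hc : p 2 = 0 := by simpa [kerVal_apply, ha, hb, hd] using h
  ext i
  fin_cases i <;> assumption

lemma coeffs_eq_zero_of_kerDeriv_eq_zero (hx : 0 < x) (h1 : kerDeriv x p = 0)
    (h2 : kerDeriv2 x p = 0) (h3 : kerDeriv3 x p = 0) : p 0 = 0 ∧ p 1 = 0 ∧ p 3 = 0 := by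
  have hx0 : (x : ℂ) ≠ 0 := by exact_mod_cast hx.ne'
  rw [kerDeriv_apply] at h1
  rw [kerDeriv2_apply] at h2
  rw [kerDeriv3_apply] at h3
  field_simp at h1 h2 h3
  have hb : p 1 = 0 := by
    have : 4 * x ^ 2 * p 1 = 0 := by linear_combination h3 + h2 - h1
    simpa [hx0] using this
  have hd : p 3 = 0 := by linear_combination h3 / 2 - x ^ 2 * hb
  refine ⟨?_, hb, hd⟩
  have : 2 * x ^ 2 * p 0 = 0 := by
    linear_combination h1 - (2 * x ^ 2 * Real.log x + x ^ 2) * hb - hd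
  simpa [hx0] using this

end Vanishing

/-- Boundary term of the energy `∫ x |q''|² + |q'|² / x` integrated by parts, for the kernel
element `q` with coefficients `p`. -/
def kerFlux (x : ℝ) (p : Fin 4 → ℂ) : ℝ :=
  (x * kerDeriv2 x p * conj (kerDeriv x p) - 4 * p 1 * conj (kerVal x p)).re

section Flux

variable {p : Fin 4 → ℂ} {x : ℝ}

lemma HasDerivAt.complex_re {f : ℝ → ℂ} {f' : ℂ} (h : HasDerivAt f f' x) :
    HasDerivAt (fun y => (f y).re) f'.re x :=
  Complex.reCLM.hasFDerivAt.comp_hasDerivAt x h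

lemma hasDerivAt_kerFlux (hx : 0 < x) :
    HasDerivAt (kerFlux · p) (x * ‖kerDeriv2 x p‖ ^ 2 + ‖kerDeriv x p‖ ^ 2 / x) x := by
  have hx0 : (x : ℂ) ≠ 0 := by exact_mod_cast hx.ne'
  refine ((((hasDerivAt_ofReal x).fun_mul (hasDerivAt_kerDeriv2 p hx)).fun_mul
    (hasDerivAt_kerDeriv p hx).star).fun_sub
    ((hasDerivAt_kerVal p hx).star.const_mul (4 * p 1))).complex_re.congr_deriv ?_
  have key : kerDeriv2 x p + x * kerDeriv3 x p - 4 * p 1 = kerDeriv x p / x := by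
    simp only [kerDeriv_apply, kerDeriv2_apply, kerDeriv3_apply]
    field_simp
    ring
  have : (1 * kerDeriv2 x p + x * kerDeriv3 x p) * conj (kerDeriv x p)
      + x * kerDeriv2 x p * conj (kerDeriv2 x p) - 4 * p 1 * conj (kerDeriv x p)
      = ((x * ‖kerDeriv2 x p‖ ^ 2 + ‖kerDeriv x p‖ ^ 2 / x : ℝ) : ℂ) := by
    rw [show (1 * kerDeriv2 x p + x * kerDeriv3 x p) * conj (kerDeriv x p)
      + x * kerDeriv2 x p * conj (kerDeriv2 x p) - 4 * p 1 * conj (kerDeriv x p)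
      = (kerDeriv2 x p + x * kerDeriv3 x p - 4 * p 1) * conj (kerDeriv x p)
        + x * (kerDeriv2 x p * conj (kerDeriv2 x p)) by ring, key, div_mul_eq_mul_div,
      Complex.mul_conj', Complex.mul_conj']
    push_cast
    ring
  exact (congrArg Complex.re this).trans (Complex.ofReal_re _)

lemma monotoneOn_kerFlux (p : Fin 4 → ℂ) : MonotoneOn (kerFlux · p) (Ioi 0) := by
  refine monotoneOn_of_hasDerivWithinAt_nonneg (convex_Ioi 0)
    (fun y hy => (hasDerivAt_kerFlux hy).continuousAt.continuousWithinAt)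
    (fun y hy => (hasDerivAt_kerFlux (interior_subset hy)).hasDerivWithinAt) fun y hy => ?_
  have hy : 0 < y := interior_subset hy
  positivity

lemma kerFlux_of_nonsingular (hb : p 1 = 0) (hd : p 3 = 0) :
    kerFlux x p = 4 * x ^ 2 * ‖p 0‖ ^ 2 := by
  have : (x : ℂ) * kerDeriv2 x p * conj (kerDeriv x p) - 4 * p 1 * conj (kerVal x p)
      = ((4 * x ^ 2 * ‖p 0‖ ^ 2 : ℝ) : ℂ) := by
    simp only [kerDeriv_apply, kerDeriv2_apply, hb, hd, map_add, map_mul, Complex.conj_ofReal,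
      map_ofNat, map_zero]
    push_cast
    rw [← Complex.mul_conj']
    ring
  rw [kerFlux, this, Complex.ofReal_re]

lemma kerFlux_of_logarithmic (hx : 0 < x) (ha : p 0 = 0) (hb : p 1 = 0) :
    kerFlux x p = -(‖p 3‖ ^ 2 / x ^ 2) := by
  have hx0 : (x : ℂ) ≠ 0 := by exact_mod_cast hx.ne'
  have : (x : ℂ) * kerDeriv2 x p * conj (kerDeriv x p) - 4 * p 1 * conj (kerVal x p)
      = ((-(‖p 3‖ ^ 2 / x ^ 2) : ℝ) : ℂ) := by
    simp only [kerDeriv_apply, kerDeriv2_apply, ha, hb, map_add, map_mul, map_inv₀,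
      Complex.conj_ofReal, map_ofNat, map_zero]
    push_cast
    rw [← Complex.mul_conj']
    field_simp
    ring
  rw [kerFlux, this, Complex.ofReal_re]

lemma kerFlux_of_kerVal_eq_zero (h : kerVal x p = 0) :
    kerFlux x p = (x * kerDeriv2 x p * conj (kerDeriv x p)).re := by
  simp [kerFlux, h]

lemma HasDerivAt.eq_zero_of_eventuallyEq_const {F : Type*} [NormedAddCommGroup F]
    [NormedSpace ℝ F] {f : ℝ → F} {f' c : F} (hf : HasDerivAt f f' x)
    (h : f =ᶠ[𝓝 x] fun _ => c) : f' = 0 :=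
  hf.unique ((hasDerivAt_const x c).congr_of_eventuallyEq h)

lemma coeffs_eq_zero_of_kerFlux_eq_zero {u v : ℝ} (hu : 0 < u) (huv : u < v)
    (h : ∀ y ∈ Ioo u v, kerFlux y p = 0) : p 0 = 0 ∧ p 1 = 0 ∧ p 3 = 0 := by
  have hderivs : ∀ y ∈ Ioo u v, kerDeriv y p = 0 ∧ kerDeriv2 y p = 0 := by
    intro y hy
    have hy0 : 0 < y := hu.trans hy.1
    have h0 := (hasDerivAt_kerFlux (p := p) hy0).eq_zero_of_eventuallyEq_const
      (eventually_of_mem (isOpen_Ioo.mem_nhds hy) h)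
    have h1 : 0 ≤ y * ‖kerDeriv2 y p‖ ^ 2 := by positivity
    have h2 : 0 ≤ ‖kerDeriv y p‖ ^ 2 / y := by positivity
    constructor
    · have : ‖kerDeriv y p‖ ^ 2 / y = 0 := by linarith
      simpa [hy0.ne'] using this
    · have : y * ‖kerDeriv2 y p‖ ^ 2 = 0 := by linarith
      simpa [hy0.ne'] using this
  obtain ⟨x, hx⟩ := nonempty_Ioo.mpr huv
  have hx0 : 0 < x := hu.trans hx.1
  refine coeffs_eq_zero_of_kerDeriv_eq_zero hx0 (hderivs x hx).1 (hderivs x hx).2 ?_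
  exact (hasDerivAt_kerDeriv2 p hx0).eq_zero_of_eventuallyEq_const
    (eventually_of_mem (isOpen_Ioo.mem_nhds hx) fun y hy => (hderivs y hy).2)

end Flux

lemma monotoneOn_Icc_of_le_succ {α : Type*} [Preorder α] {u : ℕ → α} {a b : ℕ}
    (h : ∀ j, a ≤ j → j < b → u j ≤ u (j + 1)) : MonotoneOn u (Icc a b) := by
  intro i hi j hj hij
  revert hj
  induction j, hij using Nat.le_induction with
  | base => exact fun _ => le_rfl
  | succ k hik ih =>
    exact fun hk => (ih ⟨hi.1.trans hik, Nat.le_of_succ_le hk.2⟩).trans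
      (h k (hi.1.trans hik) (Nat.lt_of_succ_le hk.2))

section Knots

variable {n : ℕ} {r : ℕ → ℝ}

lemma knot_le (hr : ∀ j, 1 ≤ j → j < n → r j < r (j + 1)) {i j : ℕ} (hi : 1 ≤ i) (hij : i ≤ j)
    (hjn : j ≤ n) : r i ≤ r j :=
  monotoneOn_Icc_of_le_succ (fun k hk hkn => (hr k hk hkn).le) ⟨hi, hij.trans hjn⟩
    ⟨hi.trans hij, hjn⟩ hij

lemma knot_pos (hr1 : 0 < r 1) (hr : ∀ j, 1 ≤ j → j < n → r j < r (j + 1)) {j : ℕ}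
    (hj : 1 ≤ j) (hjn : j ≤ n) : 0 < r j :=
  hr1.trans_le (knot_le hr le_rfl hj hjn)

end Knots

/-- The pieces of a non-singular `C²` spline in `Ker L₀` with knots `r 1 < ⋯ < r n`:
`p j` are the coefficients on `(r j, r (j + 1))`, where `r 0 = 0` and `r (n + 1) = ∞`. -/
structure IsKerSpline (n : ℕ) (r : ℕ → ℝ) (p : ℕ → Fin 4 → ℂ) : Prop where
  left : p 0 1 = 0 ∧ p 0 3 = 0
  right : p n 0 = 0 ∧ p n 1 = 0
  jet : ∀ j < n, kerVal (r (j + 1)) (p j) = kerVal (r (j + 1)) (p (j + 1)) ∧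
    kerDeriv (r (j + 1)) (p j) = kerDeriv (r (j + 1)) (p (j + 1)) ∧
    kerDeriv2 (r (j + 1)) (p j) = kerDeriv2 (r (j + 1)) (p (j + 1))

namespace IsKerSpline

variable {n : ℕ} {r : ℕ → ℝ} {p q : ℕ → Fin 4 → ℂ}

lemma sub (hp : IsKerSpline n r p) (hq : IsKerSpline n r q) : IsKerSpline n r (p - q) where
  left := by simp [hp.left, hq.left]
  right := by simp [hp.right, hq.right]
  jet j hj := by
    obtain ⟨hp0, hp1, hp2⟩ := hp.jet j hj
    obtain ⟨hq0, hq1, hq2⟩ := hq.jet j hj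
    simp [hp0, hp1, hp2, hq0, hq1, hq2]

lemma kerFlux_knot_eq_zero (hn : 1 ≤ n) (hr1 : 0 < r 1)
    (hr : ∀ j, 1 ≤ j → j < n → r j < r (j + 1)) (hp : IsKerSpline n r p)
    (hval : ∀ j, 1 ≤ j → j ≤ n → kerVal (r j) (p j) = 0) :
    (∀ j < n, kerFlux (r (j + 1)) (p j) = 0) ∧ ∀ j, 1 ≤ j → j ≤ n → kerFlux (r j) (p j) = 0 := by
  have hcont : ∀ j < n, kerFlux (r (j + 1)) (p j) = kerFlux (r (j + 1)) (p (j + 1)) := by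
    intro j hj
    obtain ⟨h0, h1, h2⟩ := hp.jet j hj
    have hv := hval (j + 1) (by omega) hj
    rw [kerFlux_of_kerVal_eq_zero (h0.trans hv), kerFlux_of_kerVal_eq_zero hv, h1, h2]
  have hmono : MonotoneOn (fun j => kerFlux (r j) (p j)) (Icc 1 n) := by
    refine monotoneOn_Icc_of_le_succ fun j hj hjn => ?_
    rw [← hcont j hjn]
    exact monotoneOn_kerFlux (p j) (knot_pos hr1 hr hj hjn.le) (knot_pos hr1 hr (by omega) hjn)
      (hr j hj hjn).le
  have h1 : 0 ≤ kerFlux (r 1) (p 1) := by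
    rw [← hcont 0 hn, kerFlux_of_nonsingular hp.left.1 hp.left.2]
    positivity
  have hn' : kerFlux (r n) (p n) ≤ 0 := by
    rw [kerFlux_of_logarithmic (knot_pos hr1 hr hn le_rfl) hp.right.1 hp.right.2]
    exact neg_nonpos.mpr (by positivity)
  have hknot : ∀ j, 1 ≤ j → j ≤ n → kerFlux (r j) (p j) = 0 := fun j hj hjn =>
    le_antisymm ((hmono ⟨hj, hjn⟩ ⟨hn, le_rfl⟩ hjn).trans hn')
      (h1.trans (hmono ⟨le_rfl, hn⟩ ⟨hj, hjn⟩ hj))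
  exact ⟨fun j hj => (hcont j hj).trans (hknot (j + 1) (by omega) hj), hknot⟩

theorem eq_zero (hn : 1 ≤ n) (hr1 : 0 < r 1) (hr : ∀ j, 1 ≤ j → j < n → r j < r (j + 1))
    (hp : IsKerSpline n r p) (hval : ∀ j, 1 ≤ j → j ≤ n → kerVal (r j) (p j) = 0) :
    ∀ j ≤ n, p j = 0 := by
  obtain ⟨hright, hleft⟩ := hp.kerFlux_knot_eq_zero hn hr1 hr hval
  intro j hjn
  rcases Nat.eq_zero_or_pos j with rfl | hj
  · have h0 := hright 0 hn
    rw [kerFlux_of_nonsingular hp.left.1 hp.left.2] at h0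
    have ha : p 0 0 = 0 := by simpa [hr1.ne'] using h0
    exact eq_zero_of_kerVal_eq_zero ha hp.left.1 hp.left.2
      ((hp.jet 0 hn).1.trans (hval 1 le_rfl hn))
  rcases hjn.lt_or_eq with hjn | hjn
  · have hrj := knot_pos hr1 hr hj hjn.le
    have hrj' := knot_pos hr1 hr (by omega) hjn
    have hzero : ∀ y ∈ Ioo (r j) (r (j + 1)), kerFlux y (p j) = 0 := fun y hy =>
      have hy0 : 0 < y := hrj.trans hy.1
      le_antisymm
        ((monotoneOn_kerFlux (p j) hy0 hrj' hy.2.le).trans (hright j hjn).le)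
        ((hleft j hj hjn.le).ge.trans (monotoneOn_kerFlux (p j) hrj hy0 hy.1.le))
    obtain ⟨ha, hb, hd⟩ := coeffs_eq_zero_of_kerFlux_eq_zero hrj (hr j hj hjn) hzero
    exact eq_zero_of_kerVal_eq_zero ha hb hd (hval j hj hjn.le)
  · rw [hjn]
    have hrn := knot_pos hr1 hr hn le_rfl
    have h0 := hleft n hn le_rfl
    rw [kerFlux_of_logarithmic hrn hp.right.1 hp.right.2] at h0
    have hd : p n 3 = 0 := by simpa [hrn.ne'] using h0
    exact eq_zero_of_kerVal_eq_zero hp.right.1 hp.right.2 hd (hval n hn le_rfl)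

end IsKerSpline

/-- `[r j, r (j + 1))`, with the conventions `r 0 = 0` (left end excluded) and `r (n + 1) = ∞`. -/
def knotPiece (n : ℕ) (r : ℕ → ℝ) (j : ℕ) : Set ℝ :=
  {x | 0 < x ∧ (1 ≤ j → r j ≤ x) ∧ (j < n → x < r (j + 1))}

def openKnotPiece (n : ℕ) (r : ℕ → ℝ) (j : ℕ) : Set ℝ :=
  {x | 0 < x ∧ (1 ≤ j → r j < x) ∧ (j < n → x < r (j + 1))}

section Pieces

variable {n : ℕ} {r : ℕ → ℝ}

lemma exists_mem_knotPiece {x : ℝ} (hx : 0 < x) : ∃ j ≤ n, x ∈ knotPiece n r j := by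
  classical
  refine ⟨Nat.findGreatest (fun k => 1 ≤ k ∧ r k ≤ x) n, Nat.findGreatest_le n, hx,
    fun hj => (Nat.findGreatest_of_ne_zero (P := fun k => 1 ≤ k ∧ r k ≤ x) rfl
      (by omega)).2, fun hjn => ?_⟩
  by_contra h
  exact Nat.findGreatest_is_greatest (Nat.lt_succ_self _) hjn ⟨by omega, not_lt.mp h⟩

lemma isOpen_openKnotPiece (j : ℕ) : IsOpen (openKnotPiece n r j) := by
  have h1 : IsOpen {x : ℝ | 1 ≤ j → r j < x} := by
    by_cases h : 1 ≤ j
    · simp only [h, true_imp_iff]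
      exact isOpen_Ioi
    · simp [h]
  have h2 : IsOpen {x : ℝ | j < n → x < r (j + 1)} := by
    by_cases h : j < n
    · simp only [h, true_imp_iff]
      exact isOpen_Iio
    · simp [h]
  exact (isOpen_lt continuous_const continuous_id).inter (h1.inter h2)

lemma openKnotPiece_mem_nhdsLT (hr1 : 0 < r 1) (hr : ∀ j, 1 ≤ j → j < n → r j < r (j + 1))
    {j : ℕ} (hjn : j < n) : openKnotPiece n r j ∈ 𝓝[<] r (j + 1) := by
  rcases Nat.eq_zero_or_pos j with rfl | hj
  · exact mem_of_superset (Ioo_mem_nhdsLT hr1) fun x hx => ⟨hx.1, by omega, fun _ => hx.2⟩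
  · exact mem_of_superset (Ioo_mem_nhdsLT (hr j hj hjn)) fun x hx =>
      ⟨(knot_pos hr1 hr hj hjn.le).trans hx.1, fun _ => hx.1, fun _ => hx.2⟩

lemma openKnotPiece_succ_mem_nhdsGT (hr1 : 0 < r 1) (hr : ∀ j, 1 ≤ j → j < n → r j < r (j + 1))
    {j : ℕ} (hjn : j < n) : openKnotPiece n r (j + 1) ∈ 𝓝[>] r (j + 1) := by
  have hright : ∀ᶠ x in 𝓝 (r (j + 1)), j + 1 < n → x < r (j + 1 + 1) := by
    by_cases h : j + 1 < n
    · exact (eventually_lt_nhds (hr (j + 1) (by omega) h)).mono fun _ hx _ => hx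
    · exact Eventually.of_forall fun _ h' => absurd h' h
  filter_upwards [self_mem_nhdsWithin, nhdsWithin_le_nhds hright] with x (hx : r (j + 1) < x) hx'
  exact ⟨(knot_pos hr1 hr (by omega) hjn).trans hx, fun _ => hx, hx'⟩

end Pieces

lemma eq_of_eqOn_of_continuousAt {X Y : Type*} [TopologicalSpace X] [TopologicalSpace Y]
    [T2Space Y] {f g : X → Y} {s : Set X} {x : X} {l : Filter X} [l.NeBot] (hl : l ≤ 𝓝 x)
    (hs : s ∈ l) (hfg : EqOn f g s) (hf : ContinuousAt f x) (hg : ContinuousAt g x) :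
    f x = g x :=
  tendsto_nhds_unique_of_eventuallyEq (hf.mono_left hl) (hg.mono_left hl) (eventually_of_mem hs hfg)

lemma ker_jet_eq_of_eqOn {f : ℝ → ℂ} (hf : ContDiffOn ℝ 2 f (Ioi 0)) {s : Set ℝ}
    (hs : IsOpen s) (hs0 : s ⊆ Ioi 0) {p : Fin 4 → ℂ} (hfp : EqOn f (kerVal · p) s) {x : ℝ}
    (hx : 0 < x) {l : Filter ℝ} [l.NeBot] (hl : l ≤ 𝓝 x) (hsl : s ∈ l) :
    kerVal x p = f x ∧ kerDeriv x p = deriv f x ∧ kerDeriv2 x p = deriv (deriv f) x := by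
  have hD : EqOn (deriv f) (kerDeriv · p) s := fun y hy =>
    (hfp.deriv hs hy).trans (hasDerivAt_kerVal p (hs0 hy)).deriv
  have hD2 : EqOn (deriv (deriv f)) (kerDeriv2 · p) s := fun y hy =>
    (hD.deriv hs hy).trans (hasDerivAt_kerDeriv p (hs0 hy)).deriv
  have hx' : Ioi (0 : ℝ) ∈ 𝓝 x := Ioi_mem_nhds hx
  have hf1 : ContDiffOn ℝ 1 (deriv f) (Ioi 0) := hf.deriv_of_isOpen isOpen_Ioi (by norm_num)
  refine ⟨?_, ?_, ?_⟩
  · exact (eq_of_eqOn_of_continuousAt hl hsl hfp (hf.continuousOn.continuousAt hx')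
      (hasDerivAt_kerVal p hx).continuousAt).symm
  · exact (eq_of_eqOn_of_continuousAt hl hsl hD (hf1.continuousOn.continuousAt hx')
      (hasDerivAt_kerDeriv p hx).continuousAt).symm
  · exact (eq_of_eqOn_of_continuousAt hl hsl hD2
      ((hf1.continuousOn_deriv_of_isOpen isOpen_Ioi le_rfl).continuousAt hx')
      (hasDerivAt_kerDeriv2 p hx).continuousAt).symm

namespace IsBLSpline

variable {n : ℕ} {r : ℕ → ℝ} {σ : ℝ → ℂ}

lemma exists_eqOn_openKnotPiece (hn : 1 ≤ n) (hσ : IsBLSpline n r σ)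
    (hns : NonSingularBLS (r 1) σ) (j : ℕ) (hjn : j ≤ n) :
    ∃ q : Fin 4 → ℂ, (j = 0 → q 1 = 0 ∧ q 3 = 0) ∧ (j = n → q 0 = 0 ∧ q 1 = 0) ∧
      EqOn σ (kerVal · q) (openKnotPiece n r j) := by
  rcases Nat.eq_zero_or_pos j with rfl | hj
  · obtain ⟨a, c, h⟩ := hns
    refine ⟨![a, 0, c, 0], by simp, by omega, fun x hx => ?_⟩
    simp [h x ⟨hx.1, hx.2.2 (by omega)⟩, kerVal_apply]
  rcases hjn.lt_or_eq with hjn | rfl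
  · obtain ⟨a, b, c, d, h⟩ := hσ.pieces j hj hjn
    refine ⟨![a, b, c, d], by omega, by omega, fun x hx => ?_⟩
    simp [h x ⟨hx.2.1 hj, hx.2.2 hjn⟩, kerVal_apply, mul_assoc]
  · obtain ⟨c, d, h⟩ := hσ.right
    refine ⟨![0, 0, c, d], by omega, by simp, fun x hx => ?_⟩
    simp [h x (hx.2.1 hj), kerVal_apply]

theorem exists_isKerSpline (hn : 1 ≤ n) (hr1 : 0 < r 1)
    (hr : ∀ j, 1 ≤ j → j < n → r j < r (j + 1)) (hσ : IsBLSpline n r σ)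
    (hns : NonSingularBLS (r 1) σ) :
    ∃ p, IsKerSpline n r p ∧ ∀ j ≤ n, ∀ x ∈ knotPiece n r j, σ x = kerVal x (p j) := by
  choose! p hleft hright hEq using hσ.exists_eqOn_openKnotPiece hn hns
  have hsub : ∀ j, openKnotPiece n r j ⊆ Ioi 0 := fun j x hx => hx.1
  have hL : ∀ j < n, kerVal (r (j + 1)) (p j) = σ (r (j + 1)) ∧
      kerDeriv (r (j + 1)) (p j) = deriv σ (r (j + 1)) ∧
      kerDeriv2 (r (j + 1)) (p j) = deriv (deriv σ) (r (j + 1)) := fun j hj =>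
    ker_jet_eq_of_eqOn hσ.smooth (isOpen_openKnotPiece j) (hsub j) (hEq j hj.le)
      (knot_pos hr1 hr (by omega) hj) nhdsWithin_le_nhds (openKnotPiece_mem_nhdsLT hr1 hr hj)
  have hR : ∀ j < n, kerVal (r (j + 1)) (p (j + 1)) = σ (r (j + 1)) ∧
      kerDeriv (r (j + 1)) (p (j + 1)) = deriv σ (r (j + 1)) ∧
      kerDeriv2 (r (j + 1)) (p (j + 1)) = deriv (deriv σ) (r (j + 1)) := fun j hj =>
    ker_jet_eq_of_eqOn hσ.smooth (isOpen_openKnotPiece (j + 1)) (hsub (j + 1)) (hEq (j + 1) hj)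
      (knot_pos hr1 hr (by omega) hj) nhdsWithin_le_nhds (openKnotPiece_succ_mem_nhdsGT hr1 hr hj)
  refine ⟨p, ⟨hleft 0 (by omega) rfl, hright n le_rfl rfl, fun j hj => ?_⟩, ?_⟩
  · obtain ⟨h0, h1, h2⟩ := hL j hj
    obtain ⟨h0', h1', h2'⟩ := hR j hj
    exact ⟨h0.trans h0'.symm, h1.trans h1'.symm, h2.trans h2'.symm⟩
  · rintro j hjn x ⟨hx0, hxl, hxr⟩
    by_cases hxj : 1 ≤ j ∧ x = r j
    · obtain ⟨i, rfl⟩ : ∃ i, j = i + 1 := ⟨j - 1, by omega⟩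
      rw [hxj.2]
      exact (hR i (by omega)).1.symm
    · exact hEq j hjn ⟨hx0, fun hj => (hxl hj).lt_of_ne fun h => hxj ⟨hj, h.symm⟩, hxr⟩

end IsBLSpline

def kfunCoeffs (t : ℝ) : Fin 4 → ℂ :=
  ![-(1 + Real.log t) / 4, 1 / 4, t ^ 2 * (1 - Real.log t) / 4, t ^ 2 / 4]

section RabutKernel

variable {t y : ℝ}

lemma Kfun_of_le (h : y ≤ t) : Kfun y t = 0 := if_pos h

lemma Kfun_eq_kerVal (ht : 0 < t) (hty : t ≤ y) : (Kfun y t : ℂ) = kerVal y (kfunCoeffs t) := by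
  simp only [kerVal_apply, kfunCoeffs, Matrix.cons_val_zero, Matrix.cons_val_one, Matrix.cons_val]
  rcases hty.eq_or_lt with rfl | hty
  · rw [Kfun_of_le le_rfl]
    push_cast
    ring
  · rw [Kfun, if_neg (not_le.mpr hty), Real.log_div (ht.trans hty).ne' ht.ne']
    push_cast
    ring

lemma kfunCoeffs_jet_self (ht : 0 < t) :
    kerVal t (kfunCoeffs t) = 0 ∧ kerDeriv t (kfunCoeffs t) = 0 ∧
      kerDeriv2 t (kfunCoeffs t) = 0 := by
  have ht0 : (t : ℂ) ≠ 0 := by exact_mod_cast ht.ne'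
  simp only [kerVal_apply, kerDeriv_apply, kerDeriv2_apply, kfunCoeffs, Matrix.cons_val_zero,
    Matrix.cons_val_one, Matrix.cons_val]
  refine ⟨by ring, by field_simp; ring, by field_simp; ring⟩

lemma Hfun_eq {r₁ t : ℝ} (h : r₁ ≤ t) (y : ℝ) :
    Hfun r₁ y t = Kfun y t - Kfun y r₁ + (y ^ 2 - r₁ ^ 2) * Real.log (t / r₁) / 4 := by
  rw [Hfun, Kfun_of_le h]
  ring

lemma Hfun_self (r₁ t : ℝ) : Hfun r₁ r₁ t = 0 := by
  simp [Hfun, Kfun_of_le le_rfl]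

end RabutKernel

section HSum

variable {n : ℕ} {r : ℕ → ℝ}

lemma sum_Kfun_eq_kerVal (hr1 : 0 < r 1) (hr : ∀ j, 1 ≤ j → j < n → r j < r (j + 1))
    (μ : ℕ → ℂ) {k : ℕ} (hkn : k ≤ n) {y : ℝ} (hy : y ∈ knotPiece n r k) :
    ∑ j ∈ Finset.Ioc 0 n, μ j * Kfun y (r j) =
      kerVal y (∑ j ∈ Finset.Ioc 0 k, μ j • kfunCoeffs (r j)) := by
  obtain ⟨-, hyl, hyr⟩ := hy
  have hhigh : ∑ j ∈ Finset.Ioc k n, μ j * (Kfun y (r j) : ℂ) = 0 := by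
    refine Finset.sum_eq_zero fun j hj => ?_
    obtain ⟨hkj, hjn⟩ := Finset.mem_Ioc.mp hj
    rw [Kfun_of_le ((hyr (by omega)).le.trans (knot_le hr (by omega) hkj hjn))]
    simp
  rw [← Finset.sum_Ioc_consecutive _ k.zero_le hkn, hhigh, add_zero, map_sum]
  refine Finset.sum_congr rfl fun j hj => ?_
  obtain ⟨hj0, hjk⟩ := Finset.mem_Ioc.mp hj
  rw [map_smul, smul_eq_mul, Kfun_eq_kerVal (knot_pos hr1 hr hj0 (hjk.trans hkn))
    ((knot_le hr hj0 hjk hkn).trans (hyl (by omega)))]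

lemma sum_Ioc_extend_weights (hn : 1 ≤ n) (lam f : ℕ → ℂ) :
    ∑ j ∈ Finset.Ioc 0 n, (if j = 1 then -∑ i ∈ Finset.Icc 2 n, lam i else lam j) * f j =
      ∑ i ∈ Finset.Icc 2 n, lam i * (f i - f 1) := by
  have hsplit : Finset.Ioc 0 n = insert 1 (Finset.Icc 2 n) := by
    ext j
    simp only [Finset.mem_Ioc, Finset.mem_insert, Finset.mem_Icc]
    omega
  have hrest : ∑ j ∈ Finset.Icc 2 n, (if j = 1 then -∑ i ∈ Finset.Icc 2 n, lam i else lam j) * f j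
      = ∑ j ∈ Finset.Icc 2 n, lam j * f j :=
    Finset.sum_congr rfl fun j hj => by rw [if_neg (by have := Finset.mem_Icc.mp hj; omega)]
  rw [hsplit, Finset.sum_insert (by simp), if_pos rfl, hrest]
  simp only [mul_sub, Finset.sum_sub_distrib, ← Finset.sum_mul]
  ring

end HSum

theorem exists_isKerSpline_Hfun_sum {n : ℕ} {r : ℕ → ℝ} (hn : 1 ≤ n) (hr1 : 0 < r 1)
    (hr : ∀ j, 1 ≤ j → j < n → r j < r (j + 1)) (ν₁ : ℝ) (lam : ℕ → ℝ) :
    ∃ S, IsKerSpline n r S ∧ ∀ j ≤ n, ∀ y ∈ knotPiece n r j,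
      ((ν₁ + ∑ i ∈ Finset.Icc 2 n, lam i * Hfun (r 1) y (r i) : ℝ) : ℂ) = kerVal y (S j) := by
  -- `λ₁ := -∑ λᵢ` absorbs the `K(·, r₁)` terms of `H`
  set μ : ℕ → ℂ := fun j => if j = 1 then -∑ i ∈ Finset.Icc 2 n, (lam i : ℂ) else lam j
  have hμ := sum_Ioc_extend_weights hn (fun i => (lam i : ℂ))
  set ℓ : ℂ := ∑ i ∈ Finset.Icc 2 n, lam i * Real.log (r i / r 1) / 4
  set S : ℕ → Fin 4 → ℂ := fun k =>
    ![ℓ, 0, ν₁ - r 1 ^ 2 * ℓ, 0] + ∑ j ∈ Finset.Ioc 0 k, μ j • kfunCoeffs (r j)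
  have hmem : ∀ i ∈ Finset.Icc 2 n, 1 ≤ i ∧ i ≤ n := fun i hi => by
    have := Finset.mem_Icc.mp hi
    omega
  have hlog : ∀ i ∈ Finset.Icc 2 n, Real.log (r i / r 1) = Real.log (r i) - Real.log (r 1) :=
    fun i hi => Real.log_div (knot_pos hr1 hr (hmem i hi).1 (hmem i hi).2).ne' hr1.ne'
  refine ⟨S, ⟨by simp [S], ?_, fun j hj => ?_⟩, fun j hjn y hy => ?_⟩
  · simp only [S, Pi.add_apply, Finset.sum_apply, Pi.smul_apply, smul_eq_mul]
    rw [hμ (fun j => kfunCoeffs (r j) 0), hμ (fun j => kfunCoeffs (r j) 1)]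
    refine ⟨?_, by simp [kfunCoeffs]⟩
    rw [Matrix.cons_val_zero, ← Finset.sum_add_distrib]
    refine Finset.sum_eq_zero fun i hi => ?_
    simp only [kfunCoeffs, Matrix.cons_val_zero, hlog i hi]
    push_cast
    ring
  · have hstep : S (j + 1) = S j + μ (j + 1) • kfunCoeffs (r (j + 1)) := by
      simp only [S, Finset.sum_Ioc_succ_top (Nat.zero_le j), add_assoc]
    obtain ⟨h0, h1, h2⟩ := kfunCoeffs_jet_self (knot_pos hr1 hr (by omega) hj)
    simp [hstep, h0, h1, h2]
  · have hH : ∀ i ∈ Finset.Icc 2 n, (lam i : ℂ) * (Hfun (r 1) y (r i) : ℂ) =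
        lam i * (Kfun y (r i) - Kfun y (r 1) : ℂ) +
          lam i * Real.log (r i / r 1) / 4 * (y ^ 2 - r 1 ^ 2) := fun i hi => by
      rw [Hfun_eq (knot_le hr le_rfl (hmem i hi).1 (hmem i hi).2)]
      push_cast
      ring
    rw [map_add, ← sum_Kfun_eq_kerVal hr1 hr μ hjn hy, hμ, kerVal_apply]
    push_cast
    rw [Finset.sum_congr rfl hH, Finset.sum_add_distrib, ← Finset.sum_mul]
    simp only [zero_mul, add_zero]
    ring

/-- if `λ̂₂, …, λ̂_n` solve the system
`Σ_{j=2}^n λ_j·H_{0,∞}(r_k, r_j) = ν_k − ν₁`, then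
`s_{0,∞}(r) = ν₁ + Σ_{j=2}^n λ̂_j·H_{0,∞}(r, r_j)` coincides on `(0,∞)` with the
non-singular Beppo Levi `L₀`-spline `σ^B` interpolating `ν j` at the knots. -/
theorem stmt9 (n : ℕ) (hn : 2 ≤ n) (r : ℕ → ℝ) (hpos : 0 < r 1)
    (hmono : ∀ j, 1 ≤ j → j < n → r j < r (j + 1))
    (ν lam : ℕ → ℝ)
    (hlam : ∀ k, 2 ≤ k → k ≤ n →
      ∑ j ∈ Finset.Icc 2 n, lam j * Hfun (r 1) (r k) (r j) = ν k - ν 1)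
    (σ : ℝ → ℂ) (hσ : IsBLSpline n r σ) (hns : NonSingularBLS (r 1) σ)
    (hint : ∀ j, 1 ≤ j → j ≤ n → σ (r j) = (ν j : ℂ)) :
    ∀ x ∈ Set.Ioi (0:ℝ),
      σ x = ((ν 1 + ∑ j ∈ Finset.Icc 2 n, lam j * Hfun (r 1) x (r j) : ℝ) : ℂ) := by
  have hn1 : 1 ≤ n := by omega
  obtain ⟨P, hP, hσP⟩ := hσ.exists_isKerSpline hn1 hpos hmono hns
  obtain ⟨S, hS, hsS⟩ := exists_isKerSpline_Hfun_sum hn1 hpos hmono (ν 1) lam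
  have hknot : ∀ k, 1 ≤ k → k ≤ n →
      ν 1 + ∑ j ∈ Finset.Icc 2 n, lam j * Hfun (r 1) (r k) (r j) = ν k := by
    intro k hk hkn
    rcases hk.eq_or_lt with rfl | hk
    · simp [Hfun_self]
    · rw [hlam k hk hkn]
      ring
  have hmem : ∀ k, 1 ≤ k → k ≤ n → r k ∈ knotPiece n r k := fun k hk hkn =>
    ⟨knot_pos hpos hmono hk hkn, fun _ => le_rfl, hmono k hk⟩
  have hPS : ∀ j ≤ n, P j - S j = 0 := (hP.sub hS).eq_zero hn1 hpos hmono fun k hk hkn => by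
    rw [map_sub, ← hσP k hkn _ (hmem k hk hkn), ← hsS k hkn _ (hmem k hk hkn),
      hint k hk hkn, hknot k hk hkn, sub_self]
  intro x hx
  obtain ⟨j, hjn, hxj⟩ := exists_mem_knotPiece (n := n) (r := r) hx
  rw [hσP j hjn x hxj, sub_eq_zero.mp (hPS j hjn), hsS j hjn x hxj]
end
end
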